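/- arXiv:2309.13405 — 4 statements merged into one kernel-verified Lean document; each statement's English description precedes it below -/
import Mathlib

section
/- Let Θ be the p×p symmetric matrix defined by Θ_ii = [Θ̂_k]_{π(i),π(i)} + ζ_i for i ∈ V_k, Θ_ij = [Θ̂_k]_{π(i),π(j)} for i ≠ j with i, j ∈ V_k, Θ_ij = −T_ij/(S_ii·S_jj − T_ij²) whenever (i,j) is a bridge of G, and Θ_ij = 0 otherwise. Let R be the p×p symmetric matrix defined by R_ij = [R̂_k]_{π(i),π(j)} if i, j ∈ V_k; R_ij = T_ij if (i,j) is a bridge of G; R_ij = 0 if i and j lie in different connected components of G; and otherwise (ψ(i) ≠ ψ(j) and i, j connected in G) R_ij = √(S_ii·S_jj)·∏_{t=0}^{2T} R_{u_t,u_{t+1}} / √(S_{u_t,u_t}·S_{u_{t+1},u_{t+1}}), where u_0 = i, u_{2T+1} = j and (u_1,u_2),…,(u_{2T−1},u_{2T}) is the bridge path from i to j (so each factor R_{u_t,u_{t+1}} falls in one of the first two cases). Then Θ·R = R·Θ = I, i.e., Θ is invertible with Θ^{-1} = R. -/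
attribute [local instance] Classical.propDecidable

noncomputable section

open Matrix

/-- The MTP2 constraint set `M^n`: real symmetric positive definite matrices with
nonpositive off-diagonal entries. -/
def MSet {n : Type*} [Fintype n] [DecidableEq n] (Θ : Matrix n n ℝ) : Prop :=
  Θ.IsSymm ∧ Θ.PosDef ∧ ∀ i j, i ≠ j → Θ i j ≤ 0

/-- The objective `f(Θ) = -log det Θ + tr(Θ S) + ∑_{i ≠ j} Λ_ij |Θ_ij|`. -/
def objf {n : Type*} [Fintype n] [DecidableEq n] (S Λ Θ : Matrix n n ℝ) : ℝ :=
  -Real.log Θ.det + (Θ * S).trace + ∑ i, ∑ j, if i = j then 0 else Λ i j * |Θ i j|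

/-- The thresholded sample covariance matrix `T` (MTP₂ version). -/
def thresh {p : ℕ} (S Λ : Matrix (Fin p) (Fin p) ℝ) : Matrix (Fin p) (Fin p) ℝ :=
  Matrix.of fun i j => if i ≠ j ∧ Λ i j < S i j then S i j - Λ i j else 0

/-- The thresholded matrix `T` for the traditional graphical lasso. -/
def threshGL {p : ℕ} (S Λ : Matrix (Fin p) (Fin p) ℝ) : Matrix (Fin p) (Fin p) ℝ :=
  Matrix.of fun i j =>
    if i = j ∨ |S i j| ≤ Λ i j then 0 else S i j - Λ i j * Real.sign (S i j)

/-- The support graph of a (symmetric) matrix: `i ~ j` iff `i ≠ j` and `A i j ≠ 0`. -/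
def suppG {p : ℕ} (A : Matrix (Fin p) (Fin p) ℝ) : SimpleGraph (Fin p) :=
  SimpleGraph.fromRel fun i j => A i j ≠ 0

/-- The graph obtained from `G` by deleting all bridges. -/
def bridgeDeleted {V : Type*} (G : SimpleGraph V) : SimpleGraph V :=
  G.deleteEdges {e | G.IsBridge e}

/-- `V` is a bridge-block of `G`: a connected component of the bridge-deleted graph. -/
def IsBlock {p : ℕ} (G : SimpleGraph (Fin p)) (V : Finset (Fin p)) : Prop :=
  ∃ i, ∀ j, j ∈ V ↔ (bridgeDeleted G).Reachable i j

/-- `ζ_i` defined from `S` and a thresholded matrix `T`. -/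
def zetaT {p : ℕ} (S T : Matrix (Fin p) (Fin p) ℝ) (i : Fin p) : ℝ :=
  (1 / S i i) *
    ∑ m, if (suppG T).IsBridge s(i, m)
      then T i m ^ 2 / (S i i * S m m - T i m ^ 2) else 0

/-- `ζ_i` for the MTP₂ problem. -/
def zeta {p : ℕ} (S Λ : Matrix (Fin p) (Fin p) ℝ) (i : Fin p) : ℝ :=
  zetaT S (thresh S Λ) i

/-- Principal submatrix of `A` on the index set `V`. -/
def subMat {p : ℕ} (A : Matrix (Fin p) (Fin p) ℝ) (V : Finset (Fin p)) :
    Matrix ↥V ↥V ℝ :=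
  A.submatrix (fun a => (a : Fin p)) fun a => (a : Fin p)

/-- `Θk` is the minimizer of the `k`-th MTP₂ subproblem on the bridge-block `V`. -/
def IsSubMinimizer {p : ℕ} (S Λ : Matrix (Fin p) (Fin p) ℝ) (V : Finset (Fin p))
    (Θk : Matrix ↥V ↥V ℝ) : Prop :=
  MSet Θk ∧ ∀ Θ' : Matrix ↥V ↥V ℝ, MSet Θ' →
    -Real.log Θk.det + (Θk * subMat (S - Λ) V).trace ≤
      -Real.log Θ'.det + (Θ' * subMat (S - Λ) V).trace

/-- `Θk` is the minimizer of the `k`-th graphical lasso subproblem on the block `V`. -/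
def IsGLSubMinimizer {p : ℕ} (S Λ : Matrix (Fin p) (Fin p) ℝ) (V : Finset (Fin p))
    (Θk : Matrix ↥V ↥V ℝ) : Prop :=
  Θk.IsSymm ∧ Θk.PosDef ∧ ∀ Θ' : Matrix ↥V ↥V ℝ, Θ'.IsSymm → Θ'.PosDef →
    objf (subMat S V) (subMat Λ V) Θk ≤ objf (subMat S V) (subMat Λ V) Θ'

/-- The product `∏_t R_{u_t,u_{t+1}} / √(S_{u_t,u_t} S_{u_{t+1},u_{t+1}})` over the
consecutive pairs of the list `l = [u_0, …, u_{2T+1}]`. -/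
def chainProd {p : ℕ} (S R : Matrix (Fin p) (Fin p) ℝ) (l : List (Fin p)) : ℝ :=
  ((l.zip l.tail).map fun q => R q.1 q.2 / Real.sqrt (S q.1 q.1 * S q.2 q.2)).prod

/-- The node sequence `u_0 = i, u_1, u_2, …, u_{2T-1}, u_{2T}, u_{2T+1} = j`, where
`(u_1,u_2), …, (u_{2T-1},u_{2T})` are the bridges traversed by the walk `W`, in order of
traversal and oriented in the direction of traversal. -/
def bridgeSeq {p : ℕ} (G : SimpleGraph (Fin p)) {i j : Fin p} (W : G.Walk i j) :
    List (Fin p) :=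
  i :: (((W.darts.filter fun d => decide (G.IsBridge d.edge)).flatMap
      fun d => [d.toProd.1, d.toProd.2]) ++ [j])



section AuxLemmas

open SimpleGraph Walk

lemma alg1 {sk sa sb sj x y z : ℝ} (hk : 0 < sk) (ha : 0 < sa) (hb : 0 < sb) (hj : 0 < sj) :
    Real.sqrt (sk*sj) * (x / Real.sqrt (sk*sa) * (y / Real.sqrt (sa*sb) * (z / Real.sqrt (sb*sj)))) =
      x * (y * z / (sa * sb)) := by
  have hk2 : Real.sqrt sk ≠ 0 := (Real.sqrt_pos.mpr hk).ne'
  have ha2 : Real.sqrt sa ≠ 0 := (Real.sqrt_pos.mpr ha).ne'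
  have hb2 : Real.sqrt sb ≠ 0 := (Real.sqrt_pos.mpr hb).ne'
  have hj2 : Real.sqrt sj ≠ 0 := (Real.sqrt_pos.mpr hj).ne'
  rw [Real.sqrt_mul hk.le, Real.sqrt_mul hk.le, Real.sqrt_mul ha.le, Real.sqrt_mul hb.le]
  rw [show sa * sb = (Real.sqrt sa * Real.sqrt sa) * (Real.sqrt sb * Real.sqrt sb) by
    rw [Real.mul_self_sqrt ha.le, Real.mul_self_sqrt hb.le]]
  field_simp

lemma alg2 {sm si sj y z : ℝ} (hm : 0 < sm) (hi : 0 < si) (hj : 0 < sj) :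
    Real.sqrt (sm*sj) * (sm / Real.sqrt (sm*sm) * (y / Real.sqrt (sm*si) * (z / Real.sqrt (si*sj)))) =
      y * z / si := by
  have hm2 : Real.sqrt sm ≠ 0 := (Real.sqrt_pos.mpr hm).ne'
  have hi2 : Real.sqrt si ≠ 0 := (Real.sqrt_pos.mpr hi).ne'
  have hj2 : Real.sqrt sj ≠ 0 := (Real.sqrt_pos.mpr hj).ne'
  rw [Real.sqrt_mul hm.le sj, Real.sqrt_mul hm.le sm, Real.sqrt_mul hm.le si,
    Real.sqrt_mul hi.le sj]
  rw [show si = Real.sqrt si * Real.sqrt si from (Real.mul_self_sqrt hi.le).symm]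
  rw [show sm = Real.sqrt sm * Real.sqrt sm from (Real.mul_self_sqrt hm.le).symm]
  field_simp
  ring_nf
  rw [Real.sq_sqrt hi.le]
  rw [Real.sq_sqrt (sq_nonneg _)]; rw [Real.sq_sqrt hi.le]; ring

lemma alg3 {sk sj x : ℝ} (hk : 0 < sk) (hj : 0 < sj) :
    Real.sqrt (sk*sj) * (x / Real.sqrt (sk*sj) * 1) = x := by
  have : Real.sqrt (sk*sj) ≠ 0 := (Real.sqrt_pos.mpr (mul_pos hk hj)).ne'
  field_simp

lemma alg4 {sk sj x : ℝ} (hk : 0 < sk) (hj : 0 < sj) :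
    Real.sqrt (sk*sj) * (sk / Real.sqrt (sk*sk) * (x / Real.sqrt (sk*sj) * (sj / Real.sqrt (sj*sj) * 1))) = x := by
  have hk2 : Real.sqrt sk ≠ 0 := (Real.sqrt_pos.mpr hk).ne'
  have hj2 : Real.sqrt sj ≠ 0 := (Real.sqrt_pos.mpr hj).ne'
  rw [Real.sqrt_mul hk.le sj, Real.sqrt_mul hk.le sk, Real.sqrt_mul hj.le sj]
  rw [show sk = Real.sqrt sk * Real.sqrt sk from (Real.mul_self_sqrt hk.le).symm]
  rw [show sj = Real.sqrt sj * Real.sqrt sj from (Real.mul_self_sqrt hj.le).symm]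
  field_simp
  rw [Real.sq_sqrt (sq_nonneg (Real.sqrt sk)), Real.sq_sqrt (sq_nonneg (Real.sqrt sj))]

variable {V : Type*} {G : SimpleGraph V}

lemma chainProd_single {p : ℕ} (S R : Matrix (Fin p) (Fin p) ℝ) (x : Fin p) :
    chainProd S R [x] = 1 := rfl

lemma chainProd_cons {p : ℕ} (S R : Matrix (Fin p) (Fin p) ℝ) (x y : Fin p)
    (l : List (Fin p)) :
    chainProd S R (x :: y :: l) =
      R x y / Real.sqrt (S x x * S y y) * chainProd S R (y :: l) := by
  simp [chainProd]

lemma isPath_append {u v w : V} {P : G.Walk u v} {Q : G.Walk v w}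
    (hP : P.IsPath) (hQ : Q.IsPath)
    (h : ∀ x, x ∈ P.support → x ∈ Q.support → x = v) : (P.append Q).IsPath := by
  rw [SimpleGraph.Walk.isPath_def, SimpleGraph.Walk.support_append]
  refine List.Nodup.append hP.support_nodup (hQ.support_nodup.tail) ?_
  intro x hx1 hx2
  have hxv : x = v := h x hx1 (List.mem_of_mem_tail hx2)
  subst hxv
  have := hQ.support_nodup
  rw [Q.support_eq_cons] at this
  exact (List.nodup_cons.mp this).1 hx2

lemma walk_first_bridge {u v : V} (W : G.Walk u v) :
    (∀ d ∈ W.darts, ¬ G.IsBridge d.edge) ∨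
    ∃ (a b : V) (hab : G.Adj a b) (P : G.Walk u a) (Q : G.Walk b v),
      G.IsBridge s(a, b) ∧ W = P.append (Walk.cons hab Q) ∧
      ∀ d ∈ P.darts, ¬ G.IsBridge d.edge := by
  induction W with
  | nil => left; simp
  | @cons x y z h w ih =>
    by_cases hb : G.IsBridge s(x, y)
    · right
      exact ⟨x, y, h, Walk.nil, w, hb, by simp, by simp⟩
    · rcases ih with hfree | ⟨a, b, hab, P, Q, h1, h2, h3⟩
      · left
        intro d hd
        rcases hd with _ | hd
        · simpa using hb
        · exact hfree _ (by assumption)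
      · right
        refine ⟨a, b, hab, Walk.cons h P, Q, h1, by rw [h2]; rfl, ?_⟩
        intro d hd
        rcases hd with _ | hd
        · simpa using hb
        · exact h3 _ (by assumption)

lemma reachable_bridgeDeleted_of_no_bridge {u v : V} (W : G.Walk u v)
    (h : ∀ d ∈ W.darts, ¬ G.IsBridge d.edge) : (bridgeDeleted G).Reachable u v := by
  refine ⟨W.toDeleteEdges {e | G.IsBridge e} ?_⟩
  intro e he
  obtain ⟨d, hd, rfl⟩ := List.mem_map.mp he
  exact h d hd

lemma exists_bridge_free_path {u v : V} (h : (bridgeDeleted G).Reachable u v) :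
    ∃ W : G.Walk u v, W.IsPath ∧ (∀ d ∈ W.darts, ¬ G.IsBridge d.edge) ∧
      ∀ x ∈ W.support, (bridgeDeleted G).Reachable u x := by
  obtain ⟨w0⟩ := h
  set w := w0.bypass with hw
  have hwp : w.IsPath := w0.bypass_isPath
  have hsub : ∀ e ∈ w.edges, e ∈ G.edgeSet := by
    intro e he
    have := w.edges_subset_edgeSet he
    rw [bridgeDeleted, edgeSet_deleteEdges] at this
    exact this.1
  refine ⟨w.transfer G hsub, hwp.transfer _, ?_, ?_⟩
  · intro d hd
    have hde : d.edge ∈ (w.transfer G hsub).edges := List.mem_map_of_mem (f := Dart.edge) hd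
    rw [Walk.edges_transfer] at hde
    have := w.edges_subset_edgeSet hde
    rw [bridgeDeleted, edgeSet_deleteEdges] at this
    exact this.2
  · intro x hx
    rw [Walk.support_transfer] at hx
    exact ⟨w.takeUntil x hx⟩

lemma bridgeDeleted_le_sdiff {x y : V} (hbr : G.IsBridge s(x, y)) :
    bridgeDeleted G ≤ G \ SimpleGraph.fromEdgeSet {s(x, y)} := by
  intro u v huv
  rw [bridgeDeleted, SimpleGraph.deleteEdges_adj] at huv
  refine ⟨huv.1, ?_⟩
  rw [SimpleGraph.fromEdgeSet_adj]
  rintro ⟨he, -⟩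
  exact huv.2 (by rw [Set.mem_singleton_iff] at he; rw [he]; exact hbr)

lemma not_bd_reachable_of_bridge {x y : V} (hbr : G.IsBridge s(x, y)) :
    ¬ (bridgeDeleted G).Reachable x y := fun r =>
  (SimpleGraph.isBridge_iff.mp hbr) (r.mono (bridgeDeleted_le_sdiff hbr))

lemma reachable_sdiff_of_avoid {x y u v : V} (W : G.Walk u v)
    (h : s(x, y) ∉ W.edges) : (G \ SimpleGraph.fromEdgeSet {s(x, y)}).Reachable u v := by
  have := SimpleGraph.Walk.toDeleteEdges ({s(x, y)} : Set (Sym2 V)) W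
    (by intro e he hee; rw [Set.mem_singleton_iff] at hee; exact h (hee ▸ he))
  exact ⟨this⟩

lemma not_bd_reachable {x y a b : V} (hab : G.Adj a b) (hbr : G.IsBridge s(a, b))
    (P : G.Walk x a) (Q : G.Walk b y) (hW : (P.append (Walk.cons hab Q)).IsPath) :
    ¬ (bridgeDeleted G).Reachable x y := by
  intro hr
  have hnodup : (P.append (Walk.cons hab Q)).edges.Nodup := hW.isTrail.edges_nodup
  rw [Walk.edges_append, Walk.edges_cons] at hnodup
  have hPav : s(a, b) ∉ P.edges := fun hmem =>
    (List.disjoint_of_nodup_append hnodup) hmem List.mem_cons_self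
  have hQav : s(a, b) ∉ Q.edges := by
    have := (List.nodup_append.mp hnodup).2.1
    exact (List.nodup_cons.mp this).1
  have hxy : (G \ SimpleGraph.fromEdgeSet {s(a, b)}).Reachable x y :=
    hr.mono (bridgeDeleted_le_sdiff hbr)
  have hxa : (G \ SimpleGraph.fromEdgeSet {s(a, b)}).Reachable x a :=
    reachable_sdiff_of_avoid P hPav
  have hby : (G \ SimpleGraph.fromEdgeSet {s(a, b)}).Reachable b y :=
    reachable_sdiff_of_avoid Q hQav
  exact (SimpleGraph.isBridge_iff.mp hbr) ((hxa.symm.trans hxy).trans hby.symm)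

lemma path_single_or_avoid {x y : V} (hxy : G.Adj x y)
    (W : G.Walk x y) (hW : W.IsPath) :
    W = Walk.cons hxy Walk.nil ∨ s(x, y) ∉ W.edges := by
  cases W with
  | nil => exact absurd rfl hxy.ne
  | @cons _ c _ h w =>
    by_cases hmem : s(x, y) ∈ (Walk.cons h w).edges
    · rw [Walk.edges_cons] at hmem
      rcases List.mem_cons.mp hmem with heq | hmem'
      · have : (x = x ∧ c = y) ∨ (x = y ∧ c = x) := by
          rw [Sym2.eq_iff] at heq
          tauto
        rcases this with ⟨-, rfl⟩ | ⟨rfl, -⟩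
        · have hw : w = Walk.nil := by
            have := (Walk.cons_isPath_iff h w).mp hW
            exact Walk.isPath_iff_eq_nil.mp this.1
          subst hw; exact Or.inl rfl
        · exact absurd rfl hxy.ne
      · exfalso
        have hx : x ∈ w.support := w.fst_mem_support_of_mem_edges hmem'
        exact ((Walk.cons_isPath_iff h w).mp hW).2 hx
    · exact Or.inr hmem

end AuxLemmas

section MasterLemmas

open SimpleGraph Walk

variable {p : ℕ} {S R : Matrix (Fin p) (Fin p) ℝ} {G : SimpleGraph (Fin p)}

lemma master
    (hSdiag : ∀ i, 0 < S i i)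
    (hRdiagS : ∀ k, R k k = S k k)
    (hRpath : ∀ i j, ¬(bridgeDeleted G).Reachable i j → ¬G.IsBridge s(i, j) →
      ∀ W : G.Walk i j, W.IsPath →
        R i j = Real.sqrt (S i i * S j j) * chainProd S R (bridgeSeq G W))
    {k j : Fin p} (W : G.Walk k j) (hW : W.IsPath) :
    Real.sqrt (S k k * S j j) * chainProd S R (bridgeSeq G W) = R k j := by
  rcases walk_first_bridge W with hfree | ⟨a, b, hab, P, Q, hbr, hWeq, hPfree⟩
  · have hfil : W.darts.filter (fun d => decide (G.IsBridge d.edge)) = [] := by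
      rw [List.filter_eq_nil_iff]
      intro d hd
      simpa using hfree d hd
    rw [bridgeSeq, hfil]
    simp only [List.flatMap_nil, List.nil_append]
    rw [chainProd_cons, chainProd_single]
    exact alg3 (hSdiag k) (hSdiag j)
  · subst hWeq
    have hnbd := not_bd_reachable hab hbr P Q hW
    by_cases hkj : G.IsBridge s(k, j)
    · have hadj : G.Adj k j := hkj.reachable_iff_adj.mp ⟨P.append (Walk.cons hab Q)⟩
      rcases path_single_or_avoid hadj _ hW with heq | havoid
      · rw [heq]
        have hseq : bridgeSeq G (Walk.cons hadj Walk.nil) = [k, k, j, j] := by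
          rw [bridgeSeq, Walk.darts_cons, Walk.darts_nil]
          rw [List.filter_cons_of_pos (p := fun d : G.Dart => decide (G.IsBridge d.edge)) (a := ⟨(k, j), hadj⟩) (decide_eq_true hkj), List.filter_nil]
          rfl
        rw [hseq, chainProd_cons, chainProd_cons, chainProd_cons, chainProd_single,
          hRdiagS k, hRdiagS j]
        exact alg4 (hSdiag k) (hSdiag j)
      · exact absurd (reachable_sdiff_of_avoid _ havoid) (SimpleGraph.isBridge_iff.mp hkj)
    · exact (hRpath k j hnbd hkj _ hW).symm

lemma chainProd_of_master
    (hSdiag : ∀ i, 0 < S i i)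
    (hRdiagS : ∀ k, R k k = S k k)
    (hRpath : ∀ i j, ¬(bridgeDeleted G).Reachable i j → ¬G.IsBridge s(i, j) →
      ∀ W : G.Walk i j, W.IsPath →
        R i j = Real.sqrt (S i i * S j j) * chainProd S R (bridgeSeq G W))
    {k j : Fin p} (W : G.Walk k j) (hW : W.IsPath) :
    chainProd S R (bridgeSeq G W) = R k j / Real.sqrt (S k k * S j j) := by
  have hne : Real.sqrt (S k k * S j j) ≠ 0 :=
    (Real.sqrt_pos.mpr (mul_pos (hSdiag k) (hSdiag j))).ne'
  rw [← master hSdiag hRdiagS hRpath W hW, mul_comm, mul_div_assoc, div_self hne, mul_one]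

lemma cons_formula
    (hSdiag : ∀ i, 0 < S i i)
    (hRdiagS : ∀ k, R k k = S k k)
    (hRpath : ∀ i j, ¬(bridgeDeleted G).Reachable i j → ¬G.IsBridge s(i, j) →
      ∀ W : G.Walk i j, W.IsPath →
        R i j = Real.sqrt (S i i * S j j) * chainProd S R (bridgeSeq G W))
    {m i j : Fin p} (hmi : G.Adj m i) (hbr : G.IsBridge s(m, i))
    (Wi : G.Walk i j) (hWi : Wi.IsPath) (hm : m ∉ Wi.support) :
    R m j = R m i * R i j / S i i := by
  have hpath : (Walk.cons hmi Wi).IsPath := hWi.cons hm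
  have h1 := (master hSdiag hRdiagS hRpath _ hpath).symm
  have h2 := chainProd_of_master hSdiag hRdiagS hRpath Wi hWi
  rw [bridgeSeq, Walk.darts_cons, List.filter_cons_of_pos (p := fun d : G.Dart => decide (G.IsBridge d.edge)) (a := ⟨(m, i), hmi⟩) (decide_eq_true hbr),
    List.flatMap_cons] at h1
  have hshape : (([m, i] ++ ((List.filter (fun d => decide (G.IsBridge d.edge)) Wi.darts).flatMap
        (fun d => [d.toProd.1, d.toProd.2]))) ++ [j])
      = m :: i :: (((List.filter (fun d => decide (G.IsBridge d.edge)) Wi.darts).flatMap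
        (fun d => [d.toProd.1, d.toProd.2])) ++ [j]) := by
    simp
  rw [hshape, chainProd_cons, chainProd_cons] at h1
  rw [bridgeSeq] at h2
  rw [h2, hRdiagS m] at h1
  rw [h1]
  exact alg2 (hSdiag m) (hSdiag i) (hSdiag j)

lemma append_formula
    (hSdiag : ∀ i, 0 < S i i)
    (hRdiagS : ∀ k, R k k = S k k)
    (hRpath : ∀ i j, ¬(bridgeDeleted G).Reachable i j → ¬G.IsBridge s(i, j) →
      ∀ W : G.Walk i j, W.IsPath →
        R i j = Real.sqrt (S i i * S j j) * chainProd S R (bridgeSeq G W))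
    {k a b j : Fin p} (hab : G.Adj a b) (hbrab : G.IsBridge s(a, b))
    (Wk : G.Walk k a) (hWkfree : ∀ d ∈ Wk.darts, ¬ G.IsBridge d.edge)
    (Q : G.Walk b j) (hQ : Q.IsPath)
    (hfull : (Wk.append (Walk.cons hab Q)).IsPath) :
    R k j = R k a * (R a b * R b j / (S a a * S b b)) := by
  have h1 := (master hSdiag hRdiagS hRpath _ hfull).symm
  have h2 := chainProd_of_master hSdiag hRdiagS hRpath Q hQ
  rw [bridgeSeq, Walk.darts_append, List.filter_append,
    List.filter_eq_nil_iff.mpr (fun d hd => by simpa using hWkfree d hd),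
    List.nil_append, Walk.darts_cons, List.filter_cons_of_pos (p := fun d : G.Dart => decide (G.IsBridge d.edge)) (a := ⟨(a, b), hab⟩) (decide_eq_true hbrab),
    List.flatMap_cons] at h1
  have hshape : (([a, b] ++ ((List.filter (fun d => decide (G.IsBridge d.edge)) Q.darts).flatMap
        (fun d => [d.toProd.1, d.toProd.2]))) ++ [j])
      = a :: b :: (((List.filter (fun d => decide (G.IsBridge d.edge)) Q.darts).flatMap
        (fun d => [d.toProd.1, d.toProd.2])) ++ [j]) := by
    simp
  rw [hshape, chainProd_cons, chainProd_cons] at h1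
  rw [bridgeSeq] at h2
  rw [h2] at h1
  rw [h1]
  exact alg1 (hSdiag k) (hSdiag a) (hSdiag b) (hSdiag j)

end MasterLemmas

/-- Theorem 2: `R` is the inverse of the decomposed matrix `Θ`. -/
theorem stmt_1 {p : ℕ} (hp : 1 ≤ p)
    (S Λ : Matrix (Fin p) (Fin p) ℝ)
    (hSsymm : S.IsSymm) (hΛsymm : Λ.IsSymm)
    (hSdiag : ∀ i, 0 < S i i) (hΛnn : ∀ i j, 0 ≤ Λ i j) (hΛdiag : ∀ i, Λ i i = 0)
    (hA1 : ∀ i j, i ≠ j → S i j < Real.sqrt (S i i * S j j))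
    -- the family of block matrices `Θ̂_k`, indexed by the bridge-blocks
    (Θhat : ∀ V : Finset (Fin p), Matrix ↥V ↥V ℝ)
    (hΘhatPD : ∀ V, IsBlock (suppG (thresh S Λ)) V → (Θhat V).IsSymm ∧ (Θhat V).PosDef)
    (hRhatDiag : ∀ V, IsBlock (suppG (thresh S Λ)) V → ∀ i, ∀ hi : i ∈ V,
      (Θhat V)⁻¹ ⟨i, hi⟩ ⟨i, hi⟩ = S i i)
    -- the matrix `R`
    (R : Matrix (Fin p) (Fin p) ℝ) (hRsymm : R.IsSymm)
    (hRblock : ∀ V, IsBlock (suppG (thresh S Λ)) V → ∀ i, ∀ hi : i ∈ V, ∀ j, ∀ hj : j ∈ V,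
      R i j = (Θhat V)⁻¹ ⟨i, hi⟩ ⟨j, hj⟩)
    (hRbridge : ∀ i j, (suppG (thresh S Λ)).IsBridge s(i, j) → R i j = thresh S Λ i j)
    (hRdisc : ∀ i j, ¬(suppG (thresh S Λ)).Reachable i j → R i j = 0)
    (hRpath : ∀ i j, ¬(bridgeDeleted (suppG (thresh S Λ))).Reachable i j →
      ¬(suppG (thresh S Λ)).IsBridge s(i, j) →
      ∀ W : (suppG (thresh S Λ)).Walk i j, W.IsPath →
        R i j = Real.sqrt (S i i * S j j) * chainProd S R (bridgeSeq (suppG (thresh S Λ)) W))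
    -- the matrix `Θ`
    (Θ : Matrix (Fin p) (Fin p) ℝ) (hΘsymm : Θ.IsSymm)
    (hΘblock : ∀ V, IsBlock (suppG (thresh S Λ)) V → ∀ i, ∀ hi : i ∈ V, ∀ j, ∀ hj : j ∈ V,
      Θ i j = if i = j then Θhat V ⟨i, hi⟩ ⟨j, hj⟩ + zeta S Λ i
        else Θhat V ⟨i, hi⟩ ⟨j, hj⟩)
    (hΘbridge : ∀ i j, (suppG (thresh S Λ)).IsBridge s(i, j) →
      Θ i j = -(thresh S Λ i j) / (S i i * S j j - thresh S Λ i j ^ 2))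
    (hΘzero : ∀ i j, i ≠ j → ¬(bridgeDeleted (suppG (thresh S Λ))).Reachable i j →
      ¬(suppG (thresh S Λ)).IsBridge s(i, j) → Θ i j = 0) :
    Θ * R = 1 ∧ R * Θ = 1 := by
  classical
  set T := thresh S Λ with hTdef
  set G := suppG T with hGdef
  -- basic facts about T
  have hTsym : ∀ x y, T x y = T y x := by
    intro x y
    rw [hTdef]
    simp only [thresh, Matrix.of_apply, hSsymm.apply y x, hΛsymm.apply y x]
    by_cases h : x = y
    · subst h; rfl
    · simp [h, Ne.symm h]
  have hTbound : ∀ x y, x ≠ y → 0 ≤ T x y ∧ T x y < Real.sqrt (S x x * S y y) := by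
    intro x y hne
    rw [hTdef]
    simp only [thresh, Matrix.of_apply]
    by_cases hc : x ≠ y ∧ Λ x y < S x y
    · rw [if_pos hc]
      refine ⟨by linarith [hc.2], ?_⟩
      have h1 := hA1 x y hne
      have h2 := hΛnn x y
      linarith
    · rw [if_neg hc]
      exact ⟨le_refl 0, Real.sqrt_pos.mpr (mul_pos (hSdiag x) (hSdiag y))⟩
  have hD : ∀ x y, x ≠ y → 0 < S x x * S y y - T x y ^ 2 := by
    intro x y hne
    obtain ⟨h0, hlt⟩ := hTbound x y hne
    have hs := Real.sq_sqrt (mul_pos (hSdiag x) (hSdiag y)).le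
    nlinarith [hlt, h0, hs]
  have hT0 : ∀ x y, ¬ G.Adj x y → T x y = 0 := by
    intro x y hxy
    by_cases hxy' : x = y
    · subst hxy'; rw [hTdef]; simp [thresh]
    · by_contra h
      exact hxy (by show (suppG T).Adj x y; rw [suppG, SimpleGraph.fromRel_adj]; exact ⟨hxy', Or.inl h⟩)
  -- blocks
  set Vof : Fin p → Finset (Fin p) :=
    fun x => Finset.univ.filter (fun y => (bridgeDeleted G).Reachable x y) with hVofdef
  have hmemV : ∀ x y, y ∈ Vof x ↔ (bridgeDeleted G).Reachable x y := by
    intro x y; rw [hVofdef]; simp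
  have hblk : ∀ x, IsBlock G (Vof x) := fun x => ⟨x, fun y => hmemV x y⟩
  have hselfV : ∀ x, x ∈ Vof x := fun x => (hmemV x x).mpr (SimpleGraph.Reachable.refl x)
  have hRdiagS : ∀ k, R k k = S k k := by
    intro k
    rw [hRblock (Vof k) (hblk k) k (hselfV k) k (hselfV k)]
    exact hRhatDiag (Vof k) (hblk k) k (hselfV k)
  have bridgeDeleted_le : bridgeDeleted G ≤ G := SimpleGraph.deleteEdges_le _
  -- the key entrywise identity
  have key : ∀ i j, (∑ k, Θ i k * R k j) = if i = j then (1:ℝ) else 0 := by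
    intro i j
    have hiV : i ∈ Vof i := hselfV i
    have hPD := (hΘhatPD (Vof i) (hblk i)).2
    have hinv : Θhat (Vof i) * (Θhat (Vof i))⁻¹ = 1 :=
      Matrix.mul_nonsing_inv _ hPD.det_pos.ne'.isUnit
    have blockSum : ∀ t, ∀ ht : t ∈ Vof i,
        (∑ k ∈ (Vof i).attach, Θhat (Vof i) ⟨i, hiV⟩ k * R k.1 t)
          = if i = t then (1:ℝ) else 0 := by
      intro t ht
      have h1 : ∀ k : {x // x ∈ Vof i}, R k.1 t = (Θhat (Vof i))⁻¹ k ⟨t, ht⟩ := fun k =>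
        hRblock (Vof i) (hblk i) k.1 k.2 t ht
      calc (∑ k ∈ (Vof i).attach, Θhat (Vof i) ⟨i, hiV⟩ k * R k.1 t)
          = ∑ k ∈ (Vof i).attach, Θhat (Vof i) ⟨i, hiV⟩ k * (Θhat (Vof i))⁻¹ k ⟨t, ht⟩ :=
            Finset.sum_congr rfl fun k _ => by rw [h1 k]
        _ = (Θhat (Vof i) * (Θhat (Vof i))⁻¹) ⟨i, hiV⟩ ⟨t, ht⟩ := by
            rw [Matrix.mul_apply, Finset.univ_eq_attach]
        _ = if i = t then (1:ℝ) else 0 := by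
            rw [hinv, Matrix.one_apply]
            by_cases h : i = t
            · subst h; simp
            · rw [if_neg h, if_neg (fun hc => h (congrArg Subtype.val hc))]
    -- decomposition of the sum
    have hsplit : (∑ k, Θ i k * R k j)
        = (∑ k ∈ (Vof i).attach, Θhat (Vof i) ⟨i, hiV⟩ k * R k.1 j)
          + zeta S Λ i * R i j
          + (∑ m, if G.IsBridge s(i, m) then Θ i m * R m j else 0) := by
      have h0 : (∑ k, Θ i k * R k j)
          = (∑ k ∈ Finset.univ.filter (fun k => k ∈ Vof i), Θ i k * R k j)
            + ∑ k ∈ Finset.univ.filter (fun k => ¬ k ∈ Vof i), Θ i k * R k j :=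
        (Finset.sum_filter_add_sum_filter_not Finset.univ _ _).symm
      have hfil : Finset.univ.filter (fun k => k ∈ Vof i) = Vof i := by
        ext k; simp
      have hV : ∑ k ∈ Vof i, Θ i k * R k j
          = (∑ k ∈ (Vof i).attach, Θhat (Vof i) ⟨i, hiV⟩ k * R k.1 j)
            + zeta S Λ i * R i j := by
        rw [← Finset.sum_attach (Vof i) (fun k => Θ i k * R k j)]
        have hterm : ∀ k : {x // x ∈ Vof i}, Θ i k.1 * R k.1 j
            = Θhat (Vof i) ⟨i, hiV⟩ k * R k.1 j
              + (if (⟨i, hiV⟩ : {x // x ∈ Vof i}) = k then zeta S Λ i * R k.1 j else 0) := by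
          intro k
          rw [hΘblock (Vof i) (hblk i) i hiV k.1 k.2]
          by_cases h : i = k.1
          · rw [if_pos h, if_pos (Subtype.ext h)]; ring
          · rw [if_neg h, if_neg (fun hc => h (congrArg Subtype.val hc))]; ring
        rw [Finset.sum_congr rfl (fun k _ => hterm k), Finset.sum_add_distrib]
        congr 1
        rw [Finset.sum_ite_eq (Vof i).attach (⟨i, hiV⟩ : {x // x ∈ Vof i})
          (fun k => zeta S Λ i * R k.1 j)]
        simp
      have hOut : ∑ k ∈ Finset.univ.filter (fun k => ¬ k ∈ Vof i), Θ i k * R k j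
          = ∑ m, if G.IsBridge s(i, m) then Θ i m * R m j else 0 := by
        have hz : ∑ k ∈ Finset.univ.filter (fun k => ¬¬ k ∈ Vof i),
            (if G.IsBridge s(i, k) then Θ i k * R k j else 0) = 0 := by
          apply Finset.sum_eq_zero
          intro k hk
          rw [Finset.mem_filter] at hk
          rw [if_neg]
          intro hbr
          exact (not_bd_reachable_of_bridge hbr) ((hmemV i k).mp (not_not.mp hk.2))
        calc ∑ k ∈ Finset.univ.filter (fun k => ¬ k ∈ Vof i), Θ i k * R k j
            = ∑ k ∈ Finset.univ.filter (fun k => ¬ k ∈ Vof i),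
                (if G.IsBridge s(i, k) then Θ i k * R k j else 0) := by
              apply Finset.sum_congr rfl
              intro k hk
              rw [Finset.mem_filter] at hk
              have hki : i ≠ k := fun h => hk.2 (h ▸ hiV)
              by_cases hbr : G.IsBridge s(i, k)
              · rw [if_pos hbr]
              · rw [if_neg hbr,
                  hΘzero i k hki (fun hr => hk.2 ((hmemV i k).mpr hr)) hbr, zero_mul]
          _ = ∑ m, if G.IsBridge s(i, m) then Θ i m * R m j else 0 := by
              rw [← Finset.sum_filter_add_sum_filter_not Finset.univ
                (fun k => ¬ k ∈ Vof i)
                (fun m => if G.IsBridge s(i, m) then Θ i m * R m j else 0), hz, add_zero]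
      rw [h0, hfil, hV, hOut]
    rcases em ((bridgeDeleted G).Reachable i j) with hbd | hnbd
    · -- same block
      have hjV : j ∈ Vof i := (hmemV i j).mpr hbd
      obtain ⟨Wi, hWip, hWifree, hWisup⟩ := exists_bridge_free_path hbd
      have hBridgeFormula : ∀ m, G.IsBridge s(i, m) → R m j = T i m * R i j / S i i := by
        intro m hbr
        have hbr' : G.IsBridge s(m, i) := by rwa [Sym2.eq_swap] at hbr
        by_cases hadjmi : G.Adj m i
        · have hm : m ∉ Wi.support := fun hm =>
            (not_bd_reachable_of_bridge hbr) (hWisup m hm)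
          have hcf := cons_formula hSdiag hRdiagS hRpath hadjmi hbr' Wi hWip hm
          rw [hcf, hRbridge m i hbr', hTsym m i]
        · have hnr : ¬ G.Reachable i m := fun hr => hadjmi (hbr.reachable_iff_adj.mp hr).symm
          rw [hT0 i m (fun h => hadjmi h.symm),
            hRdisc m j (fun hr => hnr ((hbd.mono bridgeDeleted_le).trans hr.symm))]
          simp
      have hBS : (∑ m, if G.IsBridge s(i, m) then Θ i m * R m j else 0)
          = -(zeta S Λ i * R i j) := by
        simp only [zeta, zetaT]
        rw [← hTdef, ← hGdef]
        rw [mul_comm (1 / S i i) _, mul_assoc, Finset.sum_mul, ← Finset.sum_neg_distrib]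
        apply Finset.sum_congr rfl
        intro m _
        by_cases hbr : G.IsBridge s(i, m)
        · rw [if_pos hbr, if_pos hbr, hΘbridge i m hbr, hBridgeFormula m hbr]
          ring
        · rw [if_neg hbr, if_neg hbr]; simp
      rw [hsplit, blockSum j hjV, hBS]
      ring
    · rcases em (G.Reachable i j) with hreach | hunreach
      · -- different blocks, reachable
        have hij : i ≠ j := fun h => hnbd (h ▸ SimpleGraph.Reachable.refl i)
        obtain ⟨w0⟩ := hreach
        have hW0p : w0.bypass.IsPath := SimpleGraph.Walk.bypass_isPath w0
        rcases walk_first_bridge w0.bypass with hfree | ⟨a, b, hab, P, Q, hbrab, hWeq, hPfree⟩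
        · exact absurd (reachable_bridgeDeleted_of_no_bridge _ hfree) hnbd
        have hfullpath : (P.append (SimpleGraph.Walk.cons hab Q)).IsPath := hWeq ▸ hW0p
        have hQp : Q.IsPath := (hfullpath.of_append_right).of_cons
        have hiaBD : (bridgeDeleted G).Reachable i a :=
          reachable_bridgeDeleted_of_no_bridge P hPfree
        have haV : a ∈ Vof i := (hmemV i a).mpr hiaBD
        have hQav : s(a, b) ∉ Q.edges := by
          have hnodup := hfullpath.isTrail.edges_nodup
          rw [SimpleGraph.Walk.edges_append, SimpleGraph.Walk.edges_cons] at hnodup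
          exact (List.nodup_cons.mp (List.nodup_append.mp hnodup).2.1).1
        have hQsup : ∀ x ∈ Q.support, ¬ (bridgeDeleted G).Reachable a x := by
          intro x hx hr
          have r1 : (G \ SimpleGraph.fromEdgeSet {s(a, b)}).Reachable a x :=
            hr.mono (bridgeDeleted_le_sdiff hbrab)
          have r2 : (G \ SimpleGraph.fromEdgeSet {s(a, b)}).Reachable b x :=
            reachable_sdiff_of_avoid (Q.takeUntil x hx)
              (fun hm => hQav (SimpleGraph.Walk.edges_takeUntil_subset Q hx hm))
          exact (SimpleGraph.isBridge_iff.mp hbrab) (r1.trans r2.symm)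
        have hanotQ : a ∉ Q.support := fun hx => hQsup a hx (SimpleGraph.Reachable.refl a)
        have hconsQp : (SimpleGraph.Walk.cons hab Q).IsPath := hQp.cons hanotQ
        set Cval := R a b * R b j / (S a a * S b b) with hCdef
        have C1 : ∀ k, (bridgeDeleted G).Reachable i k → R k j = R k a * Cval := by
          intro k hk
          obtain ⟨Wk, hWkp, hWkfree, hWksup⟩ := exists_bridge_free_path (hk.symm.trans hiaBD)
          have hfull : (Wk.append (SimpleGraph.Walk.cons hab Q)).IsPath := by
            apply isPath_append hWkp hconsQp
            intro x hx1 hx2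
            rw [SimpleGraph.Walk.support_cons] at hx2
            rcases List.mem_cons.mp hx2 with rfl | hx2
            · rfl
            · exact absurd ((hiaBD.symm.trans hk).trans (hWksup x hx1)) (hQsup x hx2)
          exact append_formula hSdiag hRdiagS hRpath hab hbrab Wk hWkfree Q hQp hfull
        have hRij : R i j = R i a * Cval := C1 i (SimpleGraph.Reachable.refl i)
        obtain ⟨Wi, hWip, hWifree, hWisup⟩ := exists_bridge_free_path hiaBD
        have hWiav : s(a, b) ∉ Wi.edges := by
          intro hm
          obtain ⟨d, hd, hde⟩ := List.mem_map.mp hm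
          exact (hWifree d hd) (hde ▸ hbrab)
        have hfullip : (Wi.append (SimpleGraph.Walk.cons hab Q)).IsPath := by
          apply isPath_append hWip hconsQp
          intro x hx1 hx2
          rw [SimpleGraph.Walk.support_cons] at hx2
          rcases List.mem_cons.mp hx2 with rfl | hx2
          · rfl
          · exact absurd (hiaBD.symm.trans (hWisup x hx1)) (hQsup x hx2)
        have C2 : ∀ m, G.IsBridge s(i, m) → ¬(i = a ∧ m = b) →
            R m j = T i m * R i j / S i i := by
          intro m hbr hnab
          have hbr' : G.IsBridge s(m, i) := by rwa [Sym2.eq_swap] at hbr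
          by_cases hadjmi : G.Adj m i
          · have hmnot : m ∉ (Wi.append (SimpleGraph.Walk.cons hab Q)).support := by
              intro hm
              rcases (SimpleGraph.Walk.mem_support_append_iff _ _).mp hm with hm1 | hm2
              · exact (not_bd_reachable_of_bridge hbr) (hWisup m hm1)
              · rw [SimpleGraph.Walk.support_cons] at hm2
                rcases List.mem_cons.mp hm2 with rfl | hm2
                · exact (not_bd_reachable_of_bridge hbr) hiaBD
                · have hmib : s(m, i) ≠ s(a, b) := by
                    intro he
                    rw [Sym2.eq_iff] at he
                    rcases he with ⟨rfl, rfl⟩ | ⟨rfl, rfl⟩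
                    · exact (not_bd_reachable_of_bridge hbrab) hiaBD.symm
                    · exact hnab ⟨rfl, rfl⟩
                  have r1 : (G \ SimpleGraph.fromEdgeSet {s(a, b)}).Reachable b m :=
                    reachable_sdiff_of_avoid (Q.takeUntil m hm2)
                      (fun hmm => hQav (SimpleGraph.Walk.edges_takeUntil_subset Q hm2 hmm))
                  have r2 : (G \ SimpleGraph.fromEdgeSet {s(a, b)}).Adj m i := by
                    refine ⟨hadjmi, ?_⟩
                    rw [SimpleGraph.fromEdgeSet_adj]
                    rintro ⟨he, -⟩
                    exact hmib (Set.mem_singleton_iff.mp he)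
                  have r3 : (G \ SimpleGraph.fromEdgeSet {s(a, b)}).Reachable i a :=
                    reachable_sdiff_of_avoid Wi hWiav
                  exact (SimpleGraph.isBridge_iff.mp hbrab)
                    (((r1.trans r2.reachable).trans r3).symm)
            have hcf := cons_formula hSdiag hRdiagS hRpath hadjmi hbr' _ hfullip hmnot
            rw [hcf, hRbridge m i hbr', hTsym m i]
          · have hnr : ¬ G.Reachable i m := fun hr => hadjmi (hbr.reachable_iff_adj.mp hr).symm
            rw [hT0 i m (fun h => hadjmi h.symm),
              hRdisc m j (fun hr => hnr (w0.reachable.trans hr.symm))]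
            simp
        have hBlockC : (∑ k ∈ (Vof i).attach, Θhat (Vof i) ⟨i, hiV⟩ k * R k.1 j)
            = (if i = a then (1:ℝ) else 0) * Cval := by
          rw [← blockSum a haV, Finset.sum_mul]
          apply Finset.sum_congr rfl
          intro k _
          rw [C1 k.1 ((hmemV i k.1).mp k.2)]
          ring
        by_cases hia : i = a
        · subst hia
          have hRij' : R i j = S i i * Cval := by rw [hRij, hRdiagS i]
          have hBSC : (∑ m, if G.IsBridge s(i, m) then Θ i m * R m j else 0)
              = Θ i b * R b j
                + ∑ m ∈ Finset.univ.erase b,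
                    (if G.IsBridge s(i, m) then Θ i m * R m j else 0) := by
            rw [← Finset.add_sum_erase Finset.univ _ (Finset.mem_univ b), if_pos hbrab]
          set ZB := ∑ m ∈ Finset.univ.erase b,
              (if G.IsBridge s(i, m) then T i m ^ 2 / (S i i * S m m - T i m ^ 2) else 0)
            with hZBdef
          have hzeta : zeta S Λ i
              = 1 / S i i * (T i b ^ 2 / (S i i * S b b - T i b ^ 2) + ZB) := by
            simp only [zeta, zetaT]
            rw [← hTdef, ← hGdef]
            congr 1
            rw [← Finset.add_sum_erase Finset.univ _ (Finset.mem_univ b), if_pos hbrab,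
              hZBdef]
          have hErase : ∑ m ∈ Finset.univ.erase b,
              (if G.IsBridge s(i, m) then Θ i m * R m j else 0)
              = -(ZB * (1 / S i i * R i j)) := by
            rw [hZBdef, Finset.sum_mul, ← Finset.sum_neg_distrib]
            apply Finset.sum_congr rfl
            intro m hm
            have hmb : m ≠ b := (Finset.mem_erase.mp hm).1
            by_cases hbr : G.IsBridge s(i, m)
            · rw [if_pos hbr, if_pos hbr, hΘbridge i m hbr, C2 m hbr (fun h => hmb h.2)]
              ring
            · rw [if_neg hbr, if_neg hbr]; simp
          have hDib := hD i b hab.ne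
          have hSii := (hSdiag i).ne'
          have hSbb := (hSdiag b).ne'
          rw [hsplit, hBlockC, if_pos rfl, one_mul, hBSC, hErase,
            hΘbridge i b hbrab, hzeta, if_neg hij, hRij', hCdef, hRbridge i b hbrab]
          field_simp
          ring
        · have hBS : (∑ m, if G.IsBridge s(i, m) then Θ i m * R m j else 0)
              = -(zeta S Λ i * R i j) := by
            simp only [zeta, zetaT]
            rw [← hTdef, ← hGdef]
            rw [mul_comm (1 / S i i) _, mul_assoc, Finset.sum_mul, ← Finset.sum_neg_distrib]
            apply Finset.sum_congr rfl
            intro m _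
            by_cases hbr : G.IsBridge s(i, m)
            · rw [if_pos hbr, if_pos hbr, hΘbridge i m hbr, C2 m hbr (fun h => hia h.1)]
              ring
            · rw [if_neg hbr, if_neg hbr]; simp
          rw [hsplit, hBlockC, if_neg hia, hBS, if_neg hij]
          ring
      · -- unreachable
        have hij : i ≠ j := fun h => hunreach (h ▸ SimpleGraph.Reachable.refl i)
        have hR0 : ∀ k, G.Reachable i k → R k j = 0 := fun k hk =>
          hRdisc k j (fun hr => hunreach (hk.trans hr))
        have h1 : (∑ k ∈ (Vof i).attach, Θhat (Vof i) ⟨i, hiV⟩ k * R k.1 j) = 0 := by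
          apply Finset.sum_eq_zero
          intro k _
          rw [hR0 k.1 (((hmemV i k.1).mp k.2).mono bridgeDeleted_le), mul_zero]
        have h2 : R i j = 0 := hRdisc i j hunreach
        have h3 : (∑ m, if G.IsBridge s(i, m) then Θ i m * R m j else 0) = 0 := by
          apply Finset.sum_eq_zero
          intro m _
          by_cases hbr : G.IsBridge s(i, m)
          · by_cases hadj : G.Adj i m
            · rw [if_pos hbr, hR0 m hadj.reachable, mul_zero]
            · rw [if_pos hbr, hΘbridge i m hbr, hT0 i m hadj]; simp
          · rw [if_neg hbr]
        rw [hsplit, h1, h2, h3, if_neg hij]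
        ring
  have hΘR : Θ * R = 1 := by
    ext i j
    rw [Matrix.mul_apply, key i j, Matrix.one_apply]
  refine ⟨hΘR, ?_⟩
  calc R * Θ = (Θ * R)ᵀ := by rw [Matrix.transpose_mul, hRsymm, hΘsymm]
    _ = 1 := by rw [hΘR, Matrix.transpose_one]
end
end

section
/- If in addition every Θ̂_k has nonpositive off-diagonal entries (so that each Θ̂_k is a symmetric positive definite matrix with [Θ̂_k]_{ab} ≤ 0 for a ≠ b), then the matrix R is entrywise nonnegative: R_ij ≥ 0 for all i, j. -/
attribute [local instance] Classical.propDecidable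

noncomputable section

open Matrix

lemma mmatrix_inv_nonneg {n : Type*} [Fintype n] [DecidableEq n]
    (Θ : Matrix n n ℝ) (hPD : Θ.PosDef) (hoff : ∀ a b, a ≠ b → Θ a b ≤ 0) :
    ∀ i j, 0 ≤ Θ⁻¹ i j := by
  intro i j
  by_contra hneg
  push_neg at hneg
  set x : n → ℝ := fun k => Θ⁻¹ k j with hx
  have hmul : Θ.mulVec x = fun k => if k = j then 1 else 0 := by
    funext k
    have h1 : (Θ * Θ⁻¹) k j = (1 : Matrix n n ℝ) k j := by
      rw [Matrix.mul_nonsing_inv Θ hPD.det_pos.ne'.isUnit]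
    simpa [Matrix.mulVec, Matrix.mul_apply, Matrix.one_apply, dotProduct] using h1
  set u : n → ℝ := fun k => max (x k) 0 with hu
  set v : n → ℝ := fun k => max (-(x k)) 0 with hv
  have hvnn : ∀ k, 0 ≤ v k := fun k => le_max_right _ _
  have hunn : ∀ k, 0 ≤ u k := fun k => le_max_right _ _
  have huv : ∀ k, u k * v k = 0 := by
    intro k
    rcases le_or_gt (x k) 0 with h | h
    · have h' : u k = 0 := max_eq_right h
      simp [h']
    · have h' : v k = 0 := max_eq_right (by linarith)
      simp [h']
  have hxuv : x = u - v := by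
    funext k
    simp only [Pi.sub_apply, hu, hv]
    rcases le_or_gt (x k) 0 with h | h
    · rw [max_eq_right h, max_eq_left (by linarith)]; ring
    · rw [max_eq_left h.le, max_eq_right (by linarith)]; ring
  have hvne : v ≠ 0 := by
    intro h
    have h2 : v i = 0 := congrFun h i
    simp only [hv] at h2
    have : -(x i) ≤ 0 := by
      by_contra h3
      push_neg at h3
      rw [max_eq_left h3.le] at h2
      linarith
    simp only [hx] at this
    linarith
  have hpos : 0 < v ⬝ᵥ Θ.mulVec v := by
    have := hPD.dotProduct_mulVec_pos hvne
    simpa using this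
  have hvu : v ⬝ᵥ Θ.mulVec u ≤ 0 := by
    have heq : v ⬝ᵥ Θ.mulVec u = ∑ k, ∑ m, v k * (Θ k m * u m) := by
      simp [dotProduct, Matrix.mulVec, Finset.mul_sum]
    rw [heq]
    apply Finset.sum_nonpos; intro k _
    apply Finset.sum_nonpos; intro m _
    rcases eq_or_ne k m with rfl | hkm
    · have : v k * (Θ k k * u k) = Θ k k * (u k * v k) := by ring
      rw [this, huv k, mul_zero]
    · have h1 := hoff k m hkm
      have h2 := mul_nonneg (hvnn k) (hunn m)
      nlinarith
  have hvx : v ⬝ᵥ Θ.mulVec x = v j := by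
    rw [hmul]
    simp [dotProduct]
  have hsplit : v ⬝ᵥ Θ.mulVec x = v ⬝ᵥ Θ.mulVec u - v ⬝ᵥ Θ.mulVec v := by
    rw [hxuv, Matrix.mulVec_sub, dotProduct_sub]
  have := hvnn j
  linarith [hvx, hsplit, hvu, hpos]

lemma chain_lemma {p : ℕ} (G : SimpleGraph (Fin p)) {a b : Fin p} (W : G.Walk a b) :
    (∀ c, (((W.darts.filter fun d => decide (G.IsBridge d.edge)).flatMap
        fun d => [d.toProd.1, d.toProd.2]) ++ [b]).head? = some c →
          (bridgeDeleted G).Reachable a c) ∧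
    List.Chain (fun x y => (bridgeDeleted G).Reachable x y ∨ G.IsBridge s(x, y)) a
      (((W.darts.filter fun d => decide (G.IsBridge d.edge)).flatMap
        fun d => [d.toProd.1, d.toProd.2]) ++ [b]) := by
  induction W with
  | nil =>
    refine ⟨?_, ?_⟩
    · intro c hc
      simp only [SimpleGraph.Walk.darts_nil, List.filter_nil, List.flatMap_nil,
        List.nil_append, List.head?_cons] at hc
      cases hc
      exact SimpleGraph.Reachable.refl _
    · simp only [SimpleGraph.Walk.darts_nil, List.filter_nil, List.flatMap_nil,
        List.nil_append]
      exact List.Chain.cons (Or.inl (SimpleGraph.Reachable.refl _)) List.Chain.nil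
  | @cons u v w h W ih =>
    by_cases hb : G.IsBridge s(u, v)
    · have hfil : ((SimpleGraph.Walk.cons h W).darts.filter
          fun d => decide (G.IsBridge d.edge)) =
          (⟨(u, v), h⟩ : G.Dart) :: (W.darts.filter fun d => decide (G.IsBridge d.edge)) := by
        rw [SimpleGraph.Walk.darts_cons, List.filter_cons]
        simp [SimpleGraph.Dart.edge, hb]
      rw [hfil, List.flatMap_cons]
      refine ⟨?_, ?_⟩
      · intro c hc
        simp only [List.cons_append, List.head?_cons] at hc
        cases hc
        exact SimpleGraph.Reachable.refl _
      · simp only [List.cons_append]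
        refine List.Chain.cons (Or.inl (SimpleGraph.Reachable.refl _)) ?_
        exact List.Chain.cons (Or.inr hb) ih.2
    · have hfil : ((SimpleGraph.Walk.cons h W).darts.filter
          fun d => decide (G.IsBridge d.edge)) =
          (W.darts.filter fun d => decide (G.IsBridge d.edge)) := by
        rw [SimpleGraph.Walk.darts_cons, List.filter_cons]
        simp [SimpleGraph.Dart.edge, hb]
      rw [hfil]
      have hadj : (bridgeDeleted G).Adj u v := by
        rw [bridgeDeleted, SimpleGraph.deleteEdges_adj]
        exact ⟨h, hb⟩
      obtain ⟨c, t, hct⟩ : ∃ c t, ((W.darts.filter fun d => decide (G.IsBridge d.edge)).flatMap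
          fun d => [d.toProd.1, d.toProd.2]) ++ [w] = c :: t := by
        rcases hl : ((W.darts.filter fun d => decide (G.IsBridge d.edge)).flatMap
          fun d => [d.toProd.1, d.toProd.2]) ++ [w] with _ | ⟨c, t⟩
        · exact absurd hl (List.append_ne_nil_of_right_ne_nil _ (by simp))
        · exact ⟨c, t, rfl⟩
      rw [hct]
      have hvc : (bridgeDeleted G).Reachable v c := ih.1 c (by rw [hct]; rfl)
      have hch := ih.2
      rw [hct] at hch; replace hch := List.chain_cons.mp hch
      refine ⟨?_, ?_⟩
      · intro c' hc'
        simp only [List.head?_cons] at hc'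
        cases hc'
        exact (hadj.reachable).trans hvc
      · exact List.Chain.cons (Or.inl ((hadj.reachable).trans hvc)) hch.2

lemma pairs_of_chain {α : Type*} {P : α → α → Prop} :
    ∀ {l : List α} {a : α}, List.Chain P a l → ∀ q ∈ (a :: l).zip l, P q.1 q.2 := by
  intro l
  induction l with
  | nil => intro a _ q hq; simp at hq
  | cons b t ih =>
    intro a hch q hq
    replace hch := List.chain_cons.mp hch
    rw [List.zip_cons_cons, List.mem_cons] at hq
    rcases hq with rfl | hq
    · exact hch.1
    · exact ih hch.2 q hq

lemma thresh_entry_nonneg {p : ℕ} (S Λ : Matrix (Fin p) (Fin p) ℝ) (i j : Fin p) :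
    0 ≤ thresh S Λ i j := by
  unfold thresh
  simp only [Matrix.of_apply]
  split
  · next h => linarith [h.2]
  · exact le_refl 0


/-- Corollary 4: `R` is entrywise nonnegative when each `Θ̂_k` is an
`M`-matrix. -/
theorem stmt_3 {p : ℕ} (hp : 1 ≤ p)
    (S Λ : Matrix (Fin p) (Fin p) ℝ)
    (hSsymm : S.IsSymm) (hΛsymm : Λ.IsSymm)
    (hSdiag : ∀ i, 0 < S i i) (hΛnn : ∀ i j, 0 ≤ Λ i j) (hΛdiag : ∀ i, Λ i i = 0)
    (hA1 : ∀ i j, i ≠ j → S i j < Real.sqrt (S i i * S j j))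
    -- the family of block matrices `Θ̂_k`, indexed by the bridge-blocks
    (Θhat : ∀ V : Finset (Fin p), Matrix ↥V ↥V ℝ)
    (hΘhatPD : ∀ V, IsBlock (suppG (thresh S Λ)) V → (Θhat V).IsSymm ∧ (Θhat V).PosDef)
    (hRhatDiag : ∀ V, IsBlock (suppG (thresh S Λ)) V → ∀ i, ∀ hi : i ∈ V,
      (Θhat V)⁻¹ ⟨i, hi⟩ ⟨i, hi⟩ = S i i)
    -- the matrix `R`
    (R : Matrix (Fin p) (Fin p) ℝ) (hRsymm : R.IsSymm)
    (hRblock : ∀ V, IsBlock (suppG (thresh S Λ)) V → ∀ i, ∀ hi : i ∈ V, ∀ j, ∀ hj : j ∈ V,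
      R i j = (Θhat V)⁻¹ ⟨i, hi⟩ ⟨j, hj⟩)
    (hRbridge : ∀ i j, (suppG (thresh S Λ)).IsBridge s(i, j) → R i j = thresh S Λ i j)
    (hRdisc : ∀ i j, ¬(suppG (thresh S Λ)).Reachable i j → R i j = 0)
    (hRpath : ∀ i j, ¬(bridgeDeleted (suppG (thresh S Λ))).Reachable i j →
      ¬(suppG (thresh S Λ)).IsBridge s(i, j) →
      ∀ W : (suppG (thresh S Λ)).Walk i j, W.IsPath →
        R i j = Real.sqrt (S i i * S j j) * chainProd S R (bridgeSeq (suppG (thresh S Λ)) W))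
    (hΘhatM : ∀ V, IsBlock (suppG (thresh S Λ)) V →
      ∀ a b : ↥V, a ≠ b → Θhat V a b ≤ 0) :
    ∀ i j, 0 ≤ R i j := by
  classical
  set G := suppG (thresh S Λ) with hG
  -- nonnegativity within a bridge-block
  have hblock : ∀ a b : Fin p, (bridgeDeleted G).Reachable a b → 0 ≤ R a b := by
    intro a b hab
    set V : Finset (Fin p) := Finset.univ.filter
      (fun c => (bridgeDeleted G).Reachable a c) with hV
    have hBlock : IsBlock G V := by
      refine ⟨a, fun c => ?_⟩
      simp [hV]
    have ha : a ∈ V := by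
      simp only [hV, Finset.mem_filter, Finset.mem_univ, true_and]
      exact SimpleGraph.Reachable.refl a
    have hb : b ∈ V := by simp [hV, hab]
    rw [hRblock V hBlock a ha b hb]
    exact mmatrix_inv_nonneg _ (hΘhatPD V hBlock).2 (hΘhatM V hBlock) _ _
  have hgood : ∀ a b : Fin p,
      ((bridgeDeleted G).Reachable a b ∨ G.IsBridge s(a, b)) → 0 ≤ R a b := by
    intro a b hab
    rcases hab with hab | hab
    · exact hblock a b hab
    · rw [hRbridge a b hab]
      exact thresh_entry_nonneg S Λ a b
  intro i j
  by_cases hreach : G.Reachable i j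
  · by_cases hbd : (bridgeDeleted G).Reachable i j
    · exact hblock i j hbd
    · by_cases hbr : G.IsBridge s(i, j)
      · rw [hRbridge i j hbr]
        exact thresh_entry_nonneg S Λ i j
      · obtain ⟨W0⟩ := hreach
        have hPath := W0.toPath.2
        rw [hRpath i j hbd hbr W0.toPath.1 hPath]
        apply mul_nonneg (Real.sqrt_nonneg _)
        unfold chainProd bridgeSeq
        apply List.prod_nonneg
        intro r hr
        rw [List.mem_map] at hr
        obtain ⟨q, hq, rfl⟩ := hr
        rw [List.tail_cons] at hq
        have hP := pairs_of_chain (chain_lemma G W0.toPath.1).2 q hq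
        exact div_nonneg (hgood q.1 q.2 hP) (Real.sqrt_nonneg _)
  · rw [hRdisc i j hreach]
end
end

section
/- Under Assumption 1, suppose the thresholded graph G = supp(T) is acyclic (contains no cycles). Then the unique minimizer Θ* of f over M^p admits the closed-form expression: Θ*_ii = (1/S_ii)·(1 + Σ_{m ∈ N(i)} T_im² / (S_ii·S_mm − T_im²)) for every i, where N(i) is the set of neighbors of i in G; Θ*_ij = −T_ij / (S_ii·S_jj − T_ij²) whenever (i,j) is an edge of G; and Θ*_ij = 0 for all other pairs i ≠ j. -/
attribute [local instance] Classical.propDecidable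

noncomputable section

open Matrix

lemma trace_eq_sum_eig {n : Type*} [Fintype n] [DecidableEq n] {A : Matrix n n ℝ}
    (hA : A.IsHermitian) : A.trace = ∑ i, hA.eigenvalues i := by
  conv_lhs => rw [hA.spectral_theorem]
  rw [Unitary.conjStarAlgAut_apply, trace_mul_cycle]
  have h1 : (star (hA.eigenvectorUnitary : Matrix n n ℝ)) *
      (hA.eigenvectorUnitary : Matrix n n ℝ) = 1 := by
    simpa using (Matrix.mem_unitaryGroup_iff').mp hA.eigenvectorUnitary.2
  rw [h1, Matrix.one_mul, trace_diagonal]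
  simp

open scoped MatrixOrder in
/-- Key log-det inequality with equality case. -/
lemma key_logdet {n : Type*} [Fintype n] [DecidableEq n] {A B : Matrix n n ℝ}
    (hA : A.PosDef) (hB : B.PosDef) :
    0 ≤ Real.log A.det - Real.log B.det + ((A⁻¹ * B).trace - Fintype.card n) ∧
    (Real.log A.det - Real.log B.det + ((A⁻¹ * B).trace - Fintype.card n) = 0 → B = A) := by
  classical
  have hsA : (CFC.sqrt A).PosSemidef := (CFC.sqrt_nonneg A).posSemidef
  generalize hsA_def : CFC.sqrt A = sA at hsA
  have hmul : sA * sA = A := by rw [← hsA_def]; exact CFC.sqrt_mul_sqrt_self A hA.posSemidef.nonneg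
  have hdetA : 0 < A.det := hA.det_pos
  have hdetB : 0 < B.det := hB.det_pos
  have hdet_sA : sA.det * sA.det = A.det := by rw [← det_mul, hmul]
  have hdet_sA_ne : sA.det ≠ 0 := by
    intro h; rw [h, mul_zero] at hdet_sA; exact hdetA.ne' hdet_sA.symm
  have hunit : IsUnit sA.det := isUnit_iff_ne_zero.mpr hdet_sA_ne
  have hinv_mul : sA⁻¹ * sA = 1 := nonsing_inv_mul sA hunit
  have hmul_inv : sA * sA⁻¹ = 1 := mul_nonsing_inv sA hunit
  have hsAinv_herm : sA⁻¹.IsHermitian := hsA.isHermitian.inv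
  have hC_herm : (sA⁻¹ * B * sA⁻¹).IsHermitian := by
    unfold Matrix.IsHermitian
    rw [conjTranspose_mul, conjTranspose_mul, hsAinv_herm.eq, hB.isHermitian.eq,
      Matrix.mul_assoc]
  have hC_pd : (sA⁻¹ * B * sA⁻¹).PosDef := by
    refine Matrix.PosDef.of_dotProduct_mulVec_pos hC_herm fun x hx => ?_
    have hy : sA⁻¹ *ᵥ x ≠ 0 := by
      intro h
      apply hx
      have : sA *ᵥ (sA⁻¹ *ᵥ x) = x := by
        rw [mulVec_mulVec, hmul_inv, one_mulVec]
      rw [h, mulVec_zero] at this; exact this.symm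
    have key : star x ⬝ᵥ ((sA⁻¹ * B * sA⁻¹) *ᵥ x)
        = star (sA⁻¹ *ᵥ x) ⬝ᵥ (B *ᵥ (sA⁻¹ *ᵥ x)) := by
      conv_lhs => rw [show sA⁻¹ * B * sA⁻¹ = sA⁻¹ᴴ * (B * sA⁻¹) by
        rw [hsAinv_herm.eq, Matrix.mul_assoc]]
      rw [← mulVec_mulVec, dotProduct_mulVec, ← star_mulVec, mulVec_mulVec]
    rw [key]
    exact hB.dotProduct_mulVec_pos hy
  have hAinv : A⁻¹ = sA⁻¹ * sA⁻¹ := by rw [← hmul, Matrix.mul_inv_rev]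
  have htraceC : (sA⁻¹ * B * sA⁻¹).trace = (A⁻¹ * B).trace := by
    rw [hAinv, Matrix.mul_assoc sA⁻¹ sA⁻¹ B, ← trace_mul_cycle,
      Matrix.mul_assoc B, trace_mul_comm, Matrix.mul_assoc]
  have hdetC : (sA⁻¹ * B * sA⁻¹).det = B.det / A.det := by
    rw [det_mul, det_mul, det_nonsing_inv, ← hdet_sA]
    field_simp
    rw [← mul_pow, Ring.inverse_mul_cancel _ hunit, one_pow]
  have hdetC_pos : 0 < (sA⁻¹ * B * sA⁻¹).det := hC_pd.det_pos
  have hlogC : Real.log (sA⁻¹ * B * sA⁻¹).det = Real.log B.det - Real.log A.det := by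
    rw [hdetC, Real.log_div hdetB.ne' hdetA.ne']
  have heigpos : ∀ i, 0 < hC_herm.eigenvalues i := hC_pd.eigenvalues_pos
  have htr : (sA⁻¹ * B * sA⁻¹).trace = ∑ i, hC_herm.eigenvalues i := trace_eq_sum_eig hC_herm
  have hdet2 : (sA⁻¹ * B * sA⁻¹).det = ∏ i, hC_herm.eigenvalues i := by
    simpa using hC_herm.det_eq_prod_eigenvalues
  have hlog2 : Real.log (sA⁻¹ * B * sA⁻¹).det = ∑ i, Real.log (hC_herm.eigenvalues i) := by
    rw [hdet2, Real.log_prod]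
    exact fun i _ => (heigpos i).ne'
  have hexpr : Real.log A.det - Real.log B.det + ((A⁻¹ * B).trace - Fintype.card n)
      = ∑ i, (hC_herm.eigenvalues i - 1 - Real.log (hC_herm.eigenvalues i)) := by
    have e1 : Real.log A.det - Real.log B.det = - Real.log (sA⁻¹ * B * sA⁻¹).det := by
      rw [hlogC]; ring
    rw [e1, hlog2, ← htraceC, htr, Finset.sum_sub_distrib, Finset.sum_sub_distrib,
      Finset.sum_const, Finset.card_univ, nsmul_eq_mul, mul_one]
    ring
  have hterm : ∀ i, 0 ≤ hC_herm.eigenvalues i - 1 - Real.log (hC_herm.eigenvalues i) := by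
    intro i
    have := Real.log_le_sub_one_of_pos (heigpos i)
    linarith
  constructor
  · rw [hexpr]
    exact Finset.sum_nonneg fun i _ => hterm i
  · intro h0
    rw [hexpr] at h0
    have hall : ∀ i ∈ Finset.univ, hC_herm.eigenvalues i - 1
        - Real.log (hC_herm.eigenvalues i) = 0 :=
      (Finset.sum_eq_zero_iff_of_nonneg (fun i _ => hterm i)).mp h0
    have hone : ∀ i, hC_herm.eigenvalues i = 1 := by
      intro i
      by_contra hne
      have h2 := Real.log_lt_sub_one_of_pos (heigpos i) hne
      have h3 := hall i (Finset.mem_univ i)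
      linarith
    have hCone : sA⁻¹ * B * sA⁻¹ = 1 := by
      conv_lhs => rw [hC_herm.spectral_theorem]
      have hd : Matrix.diagonal (RCLike.ofReal ∘ hC_herm.eigenvalues) = (1 : Matrix n n ℝ) := by
        have he : (RCLike.ofReal ∘ hC_herm.eigenvalues : n → ℝ) = fun _ => (1 : ℝ) :=
          funext fun i => by simp [hone i]
        rw [he]
        exact Matrix.diagonal_one
      rw [Unitary.conjStarAlgAut_apply, hd, Matrix.mul_one]
      simpa using (Matrix.mem_unitaryGroup_iff).mp hC_herm.eigenvectorUnitary.2
    have hfin : sA * (sA⁻¹ * B * sA⁻¹) * sA = sA * 1 * sA := by rw [hCone]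
    have hleft : sA * (sA⁻¹ * B * sA⁻¹) * sA = B := by
      simp only [← Matrix.mul_assoc]
      rw [hmul_inv, Matrix.one_mul, Matrix.mul_assoc, hinv_mul, Matrix.mul_one]
    rw [← hleft, hfin, Matrix.mul_one, hmul]

namespace Stmt6

variable {p : ℕ}

/-- edge weight -/
def rwt (S Λ : Matrix (Fin p) (Fin p) ℝ) (i j : Fin p) : ℝ :=
  thresh S Λ i j / Real.sqrt (S i i * S j j)

def wprod (S Λ : Matrix (Fin p) (Fin p) ℝ) {i j : Fin p}
    (w : (suppG (thresh S Λ)).Walk i j) : ℝ :=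
  (w.darts.map fun d => rwt S Λ d.toProd.1 d.toProd.2).prod

def rho (S Λ : Matrix (Fin p) (Fin p) ℝ) (i j : Fin p) : ℝ :=
  if h : (suppG (thresh S Λ)).Reachable i j then
    wprod S Λ ((Classical.choice h).toPath : (suppG (thresh S Λ)).Path i j).1 else 0

section Basic

variable {S Λ : Matrix (Fin p) (Fin p) ℝ}

lemma thresh_nonneg (i j : Fin p) : 0 ≤ thresh S Λ i j := by
  unfold thresh
  simp only [Matrix.of_apply]
  split
  · next h => linarith [h.2]
  · exact le_refl 0

lemma thresh_symm (hS : S.IsSymm) (hΛ : Λ.IsSymm) (i j : Fin p) :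
    thresh S Λ i j = thresh S Λ j i := by
  unfold thresh
  simp only [Matrix.of_apply]
  rw [← hS.apply j i, ← hΛ.apply j i]
  by_cases h : i = j <;> simp [h, ne_comm, eq_comm]

lemma adj_iff (hS : S.IsSymm) (hΛ : Λ.IsSymm) {i j : Fin p} :
    (suppG (thresh S Λ)).Adj i j ↔ i ≠ j ∧ 0 < thresh S Λ i j := by
  unfold suppG
  rw [SimpleGraph.fromRel_adj]
  constructor
  · rintro ⟨hne, h | h⟩
    · exact ⟨hne, lt_of_le_of_ne (thresh_nonneg i j) (Ne.symm h)⟩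
    · rw [← thresh_symm hS hΛ] at h
      exact ⟨hne, lt_of_le_of_ne (thresh_nonneg i j) (Ne.symm h)⟩
  · rintro ⟨hne, h⟩
    exact ⟨hne, Or.inl h.ne'⟩

lemma adj_T_pos (hS : S.IsSymm) (hΛ : Λ.IsSymm) {i j : Fin p}
    (h : (suppG (thresh S Λ)).Adj i j) : 0 < thresh S Λ i j :=
  ((adj_iff hS hΛ).mp h).2

lemma thresh_le (hΛnn : ∀ i j, 0 ≤ Λ i j) (i j : Fin p) : thresh S Λ i j ≤ S i j ∨ thresh S Λ i j = 0 := by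
  unfold thresh
  simp only [Matrix.of_apply]
  split
  · exact Or.inl (by linarith [hΛnn i j])
  · exact Or.inr rfl

lemma adj_T_lt (hS : S.IsSymm) (hΛ : Λ.IsSymm) (hΛnn : ∀ i j, 0 ≤ Λ i j)
    (hA1 : ∀ i j, i ≠ j → S i j < Real.sqrt (S i i * S j j)) {i j : Fin p}
    (h : (suppG (thresh S Λ)).Adj i j) :
    thresh S Λ i j < Real.sqrt (S i i * S j j) := by
  have hne : i ≠ j := ((adj_iff hS hΛ).mp h).1
  rcases thresh_le (S := S) hΛnn i j with h1 | h1
  · exact lt_of_le_of_lt h1 (hA1 i j hne)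
  · exact absurd h1 (adj_T_pos hS hΛ h).ne'

lemma delta_pos (hS : S.IsSymm) (hΛ : Λ.IsSymm) (hΛnn : ∀ i j, 0 ≤ Λ i j)
    (hSdiag : ∀ i, 0 < S i i)
    (hA1 : ∀ i j, i ≠ j → S i j < Real.sqrt (S i i * S j j)) {i j : Fin p}
    (h : (suppG (thresh S Λ)).Adj i j) :
    0 < S i i * S j j - thresh S Λ i j ^ 2 := by
  have h1 := adj_T_pos hS hΛ h
  have h2 := adj_T_lt hS hΛ hΛnn hA1 h
  have h3 : (0:ℝ) ≤ S i i * S j j := le_of_lt (mul_pos (hSdiag i) (hSdiag j))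
  nlinarith [Real.sq_sqrt h3, Real.sqrt_nonneg (S i i * S j j)]

lemma rwt_nonneg (hSdiag : ∀ i, 0 < S i i) (i j : Fin p) : 0 ≤ rwt S Λ i j :=
  div_nonneg (thresh_nonneg i j) (Real.sqrt_nonneg _)

lemma rwt_pos (hS : S.IsSymm) (hΛ : Λ.IsSymm) (hSdiag : ∀ i, 0 < S i i) {i j : Fin p}
    (h : (suppG (thresh S Λ)).Adj i j) : 0 < rwt S Λ i j :=
  div_pos (adj_T_pos hS hΛ h) (Real.sqrt_pos.mpr (mul_pos (hSdiag i) (hSdiag j)))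

lemma rwt_lt_one (hS : S.IsSymm) (hΛ : Λ.IsSymm) (hΛnn : ∀ i j, 0 ≤ Λ i j)
    (hSdiag : ∀ i, 0 < S i i)
    (hA1 : ∀ i j, i ≠ j → S i j < Real.sqrt (S i i * S j j)) {i j : Fin p}
    (h : (suppG (thresh S Λ)).Adj i j) : rwt S Λ i j < 1 := by
  have h2 := adj_T_lt hS hΛ hΛnn hA1 h
  have h3 : 0 < Real.sqrt (S i i * S j j) :=
    Real.sqrt_pos.mpr (mul_pos (hSdiag i) (hSdiag j))
  rw [rwt, div_lt_one h3]
  exact h2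

lemma rwt_symm (hS : S.IsSymm) (hΛ : Λ.IsSymm) (i j : Fin p) :
    rwt S Λ i j = rwt S Λ j i := by
  rw [rwt, rwt, thresh_symm hS hΛ, mul_comm]

lemma rwt_sq (hS : S.IsSymm) (hΛ : Λ.IsSymm) (hΛnn : ∀ i j, 0 ≤ Λ i j)
    (hSdiag : ∀ i, 0 < S i i) (i j : Fin p) :
    rwt S Λ i j ^ 2 = thresh S Λ i j ^ 2 / (S i i * S j j) := by
  rw [rwt, div_pow, Real.sq_sqrt (le_of_lt (mul_pos (hSdiag i) (hSdiag j)))]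

end Basic

section WProd

variable {S Λ : Matrix (Fin p) (Fin p) ℝ}

@[simp] lemma wprod_nil {i : Fin p} : wprod S Λ (SimpleGraph.Walk.nil' i) = 1 := by
  simp [wprod]

@[simp] lemma wprod_cons {i j k : Fin p} (h : (suppG (thresh S Λ)).Adj i j)
    (w : (suppG (thresh S Λ)).Walk j k) :
    wprod S Λ (SimpleGraph.Walk.cons h w) = rwt S Λ i j * wprod S Λ w := by
  simp [wprod]

lemma wprod_pos (hS : S.IsSymm) (hΛ : Λ.IsSymm) (hSdiag : ∀ i, 0 < S i i)
    {i j : Fin p} (w : (suppG (thresh S Λ)).Walk i j) : 0 < wprod S Λ w := by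
  induction w with
  | nil => simp [wprod]
  | cons h w ih =>
      rw [wprod_cons]
      exact mul_pos (rwt_pos hS hΛ hSdiag h) ih

lemma wprod_reverse (hS : S.IsSymm) (hΛ : Λ.IsSymm) {i j : Fin p}
    (w : (suppG (thresh S Λ)).Walk i j) :
    wprod S Λ w.reverse = wprod S Λ w := by
  unfold wprod
  rw [SimpleGraph.Walk.darts_reverse, List.map_reverse, List.prod_reverse, List.map_map]
  congr 1
  apply List.map_congr_left
  intro d _
  simp only [Function.comp_apply, SimpleGraph.Dart.symm_toProd, Prod.fst_swap, Prod.snd_swap]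
  exact (rwt_symm hS hΛ _ _).symm

end WProd

section Rho

variable {S Λ : Matrix (Fin p) (Fin p) ℝ}
variable (hac : (suppG (thresh S Λ)).IsAcyclic)

lemma rho_eq_wprod (hac : (suppG (thresh S Λ)).IsAcyclic) {i j : Fin p}
    (P : (suppG (thresh S Λ)).Walk i j) (hP : P.IsPath) :
    rho S Λ i j = wprod S Λ P := by
  have h : (suppG (thresh S Λ)).Reachable i j := ⟨P⟩
  rw [rho, dif_pos h]
  have := hac.path_unique ((Classical.choice h).toPath) ⟨P, hP⟩
  rw [this]

lemma rho_self (hac : (suppG (thresh S Λ)).IsAcyclic) (i : Fin p) : rho S Λ i i = 1 := by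
  rw [rho_eq_wprod hac (SimpleGraph.Walk.nil' i) SimpleGraph.Walk.IsPath.nil, wprod_nil]

lemma rho_adj (hac : (suppG (thresh S Λ)).IsAcyclic) {i j : Fin p}
    (h : (suppG (thresh S Λ)).Adj i j) : rho S Λ i j = rwt S Λ i j := by
  have hP : (SimpleGraph.Walk.cons h (SimpleGraph.Walk.nil' j)).IsPath := by
    simp [SimpleGraph.Walk.cons_isPath_iff, h.ne]
  rw [rho_eq_wprod hac _ hP, wprod_cons, wprod_nil, mul_one]

lemma rho_zero {i j : Fin p} (h : ¬ (suppG (thresh S Λ)).Reachable i j) :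
    rho S Λ i j = 0 := by rw [rho, dif_neg h]

lemma rho_pos (hS : S.IsSymm) (hΛ : Λ.IsSymm) (hSdiag : ∀ i, 0 < S i i)
    {i j : Fin p} (h : (suppG (thresh S Λ)).Reachable i j) : 0 < rho S Λ i j := by
  rw [rho, dif_pos h]
  exact wprod_pos hS hΛ hSdiag _

lemma rho_nonneg (hS : S.IsSymm) (hΛ : Λ.IsSymm) (hSdiag : ∀ i, 0 < S i i)
    (i j : Fin p) : 0 ≤ rho S Λ i j := by
  by_cases h : (suppG (thresh S Λ)).Reachable i j
  · exact le_of_lt (rho_pos hS hΛ hSdiag h)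
  · rw [rho_zero h]

lemma rho_symm (hS : S.IsSymm) (hΛ : Λ.IsSymm) (hac : (suppG (thresh S Λ)).IsAcyclic)
    (i j : Fin p) : rho S Λ i j = rho S Λ j i := by
  by_cases h : (suppG (thresh S Λ)).Reachable i j
  · obtain ⟨P⟩ := h
    have hP := P.toPath.2
    rw [rho_eq_wprod hac P.toPath.1 hP,
      rho_eq_wprod hac (P.toPath.1).reverse (hP.reverse), wprod_reverse hS hΛ]
  · rw [rho_zero h, rho_zero fun h' => h h'.symm]

end Rho

section Decomp

variable {S Λ : Matrix (Fin p) (Fin p) ℝ}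

/-- In an acyclic graph, if a path from `i` starts with edge to `m0`, and `m ~ i` lies on the
path, then `m = m0`. -/
lemma snd_eq (hac : (suppG (thresh S Λ)).IsAcyclic) {i k m m0 : Fin p}
    (h0 : (suppG (thresh S Λ)).Adj i m0) (Q : (suppG (thresh S Λ)).Walk m0 k)
    (hP : (SimpleGraph.Walk.cons h0 Q).IsPath)
    (hm : (suppG (thresh S Λ)).Adj i m) (hsup : m ∈ (SimpleGraph.Walk.cons h0 Q).support) :
    m0 = m := by
  have htk : ((SimpleGraph.Walk.cons h0 Q).takeUntil m hsup).IsPath := hP.takeUntil hsup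
  have hedge : (SimpleGraph.Walk.cons hm (SimpleGraph.Walk.nil' m)).IsPath := by
    simp [SimpleGraph.Walk.cons_isPath_iff, hm.ne]
  have huniq := hac.path_unique ⟨(SimpleGraph.Walk.cons h0 Q).takeUntil m hsup, htk⟩
    ⟨SimpleGraph.Walk.cons hm (SimpleGraph.Walk.nil' m), hedge⟩
  have hPeq : SimpleGraph.Walk.cons h0 Q
      = SimpleGraph.Walk.cons hm ((SimpleGraph.Walk.cons h0 Q).dropUntil m hsup) := by
    conv_lhs => rw [← (SimpleGraph.Walk.cons h0 Q).take_spec hsup]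
    rw [show (SimpleGraph.Walk.cons h0 Q).takeUntil m hsup
        = SimpleGraph.Walk.cons hm (SimpleGraph.Walk.nil' m) from
      congrArg Subtype.val huniq]
    simp
  have hsup_eq := congrArg SimpleGraph.Walk.support hPeq
  rw [SimpleGraph.Walk.support_cons, SimpleGraph.Walk.support_cons] at hsup_eq
  have h4 : Q.support = ((SimpleGraph.Walk.cons h0 Q).dropUntil m hsup).support :=
    List.tail_eq_of_cons_eq hsup_eq
  have hQ : Q.support = m0 :: Q.support.tail := Q.support_eq_cons
  have hD := ((SimpleGraph.Walk.cons h0 Q).dropUntil m hsup).support_eq_cons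
  rw [hQ, hD] at h4
  exact (List.head_eq_of_cons_eq h4)

/-- Decomposition of `rho i k` along the first edge of the path, with values of `rho m k`
for all the other neighbours `m` of `i`. -/
lemma exists_m0 (hac : (suppG (thresh S Λ)).IsAcyclic) {i k : Fin p}
    (hik : (suppG (thresh S Λ)).Reachable i k) (hne : i ≠ k) :
    ∃ m0, (suppG (thresh S Λ)).Adj i m0 ∧
      rho S Λ i k = rwt S Λ i m0 * rho S Λ m0 k ∧
      ∀ m, (suppG (thresh S Λ)).Adj i m → m ≠ m0 →
        rho S Λ m k = rwt S Λ m i * rho S Λ i k := by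
  obtain ⟨P0⟩ := hik
  obtain ⟨P, hP⟩ := P0.toPath
  obtain ⟨m0, h0, Q, rfl⟩ := P.exists_eq_cons_of_ne hne
  refine ⟨m0, h0, ?_, ?_⟩
  · rw [rho_eq_wprod hac _ hP, wprod_cons, rho_eq_wprod hac Q hP.of_cons]
  · intro m hm hmne
    have hnsup : m ∉ (SimpleGraph.Walk.cons h0 Q).support := by
      intro hsup
      exact hmne (snd_eq hac h0 Q hP hm hsup).symm
    have hcons : (SimpleGraph.Walk.cons hm.symm (SimpleGraph.Walk.cons h0 Q)).IsPath :=
      hP.cons hnsup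
    rw [rho_eq_wprod hac _ hcons, wprod_cons, rho_eq_wprod hac _ hP]

end Decomp

def Wm (S Λ : Matrix (Fin p) (Fin p) ℝ) : Matrix (Fin p) (Fin p) ℝ :=
  Matrix.of fun i j => Real.sqrt (S i i * S j j) * rho S Λ i j

def Th0 (S Λ : Matrix (Fin p) (Fin p) ℝ) : Matrix (Fin p) (Fin p) ℝ :=
  Matrix.of fun i j =>
    if i = j then
      (1 / S i i) * (1 + ∑ m, if (suppG (thresh S Λ)).Adj i m
        then thresh S Λ i m ^ 2 / (S i i * S m m - thresh S Λ i m ^ 2) else 0)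
    else if (suppG (thresh S Λ)).Adj i j
      then -(thresh S Λ i j) / (S i i * S j j - thresh S Λ i j ^ 2) else 0

section Helpers

lemma sqrt_helper1 {a b c : ℝ} (t : ℝ) (ha : 0 < a) (hb : 0 < b) (hc : 0 < c) :
    Real.sqrt (a * c) * (t / Real.sqrt (a * b)) = t * Real.sqrt (b * c) / b := by
  have ha' : Real.sqrt a ≠ 0 := ne_of_gt (Real.sqrt_pos.mpr ha)
  have hb' : Real.sqrt b ≠ 0 := ne_of_gt (Real.sqrt_pos.mpr hb)
  have hb2 : Real.sqrt b * Real.sqrt b = b := Real.mul_self_sqrt hb.le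
  rw [Real.sqrt_mul ha.le, Real.sqrt_mul ha.le, Real.sqrt_mul hb.le]
  field_simp
  linear_combination (-t) * hb2

lemma sqrt_helper2 {a b c : ℝ} (t ρ : ℝ) (ha : 0 < a) (hb : 0 < b) (hc : 0 < c)
    (ht : t ≠ 0) :
    b * (Real.sqrt (a * c) * (t / Real.sqrt (a * b) * ρ)) / t = Real.sqrt (b * c) * ρ := by
  have ha' : Real.sqrt a ≠ 0 := ne_of_gt (Real.sqrt_pos.mpr ha)
  have hb' : Real.sqrt b ≠ 0 := ne_of_gt (Real.sqrt_pos.mpr hb)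
  have hb2 : Real.sqrt b * Real.sqrt b = b := Real.mul_self_sqrt hb.le
  rw [Real.sqrt_mul ha.le, Real.sqrt_mul ha.le, Real.sqrt_mul hb.le]
  field_simp
  linear_combination (-ρ) * hb2

end Helpers

section WmFacts

variable {S Λ : Matrix (Fin p) (Fin p) ℝ}

lemma Wm_diag (hSdiag : ∀ i, 0 < S i i) (hac : (suppG (thresh S Λ)).IsAcyclic) (i : Fin p) :
    Wm S Λ i i = S i i := by
  rw [Wm, Matrix.of_apply, rho_self hac, mul_one, Real.sqrt_mul_self (hSdiag i).le]

lemma Wm_adj (hSdiag : ∀ i, 0 < S i i) (hac : (suppG (thresh S Λ)).IsAcyclic) {i j : Fin p}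
    (h : (suppG (thresh S Λ)).Adj i j) : Wm S Λ i j = thresh S Λ i j := by
  have hs : Real.sqrt (S i i * S j j) ≠ 0 :=
    ne_of_gt (Real.sqrt_pos.mpr (mul_pos (hSdiag i) (hSdiag j)))
  rw [Wm, Matrix.of_apply, rho_adj hac h, rwt, mul_div_cancel₀ _ hs]

lemma Wm_nonneg (hS : S.IsSymm) (hΛ : Λ.IsSymm) (hSdiag : ∀ i, 0 < S i i) (i j : Fin p) :
    0 ≤ Wm S Λ i j :=
  mul_nonneg (Real.sqrt_nonneg _) (rho_nonneg hS hΛ hSdiag i j)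

lemma Wm_symm (hS : S.IsSymm) (hΛ : Λ.IsSymm) (hac : (suppG (thresh S Λ)).IsAcyclic)
    (i j : Fin p) : Wm S Λ i j = Wm S Λ j i := by
  rw [Wm, Matrix.of_apply, Matrix.of_apply, rho_symm hS hΛ hac, mul_comm (S i i)]

lemma Th0_symm_apply (hS : S.IsSymm) (hΛ : Λ.IsSymm) (i j : Fin p) :
    Th0 S Λ i j = Th0 S Λ j i := by
  unfold Th0
  simp only [Matrix.of_apply]
  by_cases h : i = j
  · subst h; rfl
  · rw [if_neg h, if_neg (Ne.symm h)]
    have hadj : (suppG (thresh S Λ)).Adj i j ↔ (suppG (thresh S Λ)).Adj j i :=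
      ⟨SimpleGraph.Adj.symm, SimpleGraph.Adj.symm⟩
    by_cases ha : (suppG (thresh S Λ)).Adj i j
    · rw [if_pos ha, if_pos (hadj.mp ha), thresh_symm hS hΛ, mul_comm (S i i)]
    · rw [if_neg ha, if_neg (fun h' => ha (hadj.mpr h'))]

lemma Th0_offdiag_nonpos (hS : S.IsSymm) (hΛ : Λ.IsSymm) (hΛnn : ∀ i j, 0 ≤ Λ i j)
    (hSdiag : ∀ i, 0 < S i i)
    (hA1 : ∀ i j, i ≠ j → S i j < Real.sqrt (S i i * S j j))
    {i j : Fin p} (hne : i ≠ j) : Th0 S Λ i j ≤ 0 := by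
  unfold Th0
  simp only [Matrix.of_apply, if_neg hne]
  by_cases ha : (suppG (thresh S Λ)).Adj i j
  · rw [if_pos ha]
    apply div_nonpos_of_nonpos_of_nonneg
    · linarith [adj_T_pos hS hΛ ha]
    · exact (delta_pos hS hΛ hΛnn hSdiag hA1 ha).le
  · rw [if_neg ha]

end WmFacts

section Inverse

variable {S Λ : Matrix (Fin p) (Fin p) ℝ}

lemma Th0_mul_Wm (hS : S.IsSymm) (hΛ : Λ.IsSymm) (hΛnn : ∀ i j, 0 ≤ Λ i j)
    (hSdiag : ∀ i, 0 < S i i)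
    (hA1 : ∀ i j, i ≠ j → S i j < Real.sqrt (S i i * S j j))
    (hac : (suppG (thresh S Λ)).IsAcyclic) :
    Th0 S Λ * Wm S Λ = 1 := by
  ext i k
  rw [Matrix.mul_apply]
  by_cases hik : k = i
  · subst hik
    rw [Matrix.one_apply_eq]
    rw [← Finset.add_sum_erase Finset.univ _ (Finset.mem_univ k)]
    have hfk : Th0 S Λ k k * Wm S Λ k k
        = 1 + ∑ m, (if (suppG (thresh S Λ)).Adj k m
            then thresh S Λ k m ^ 2 / (S k k * S m m - thresh S Λ k m ^ 2) else 0) := by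
      rw [Wm_diag hSdiag hac, Th0, Matrix.of_apply, if_pos rfl]
      field_simp
      exact mul_div_cancel_left₀ _ (hSdiag k).ne'
    have hrest : ∑ j ∈ Finset.univ.erase k, Th0 S Λ k j * Wm S Λ j k
        = - ∑ m, (if (suppG (thresh S Λ)).Adj k m
            then thresh S Λ k m ^ 2 / (S k k * S m m - thresh S Λ k m ^ 2) else 0) := by
      have step1 : ∀ j ∈ Finset.univ.erase k, Th0 S Λ k j * Wm S Λ j k
          = - (if (suppG (thresh S Λ)).Adj k j
              then thresh S Λ k j ^ 2 / (S k k * S j j - thresh S Λ k j ^ 2) else 0) := by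
        intro j hj
        have hjk : j ≠ k := (Finset.mem_erase.mp hj).1
        rw [Th0, Matrix.of_apply, if_neg (Ne.symm hjk)]
        by_cases ha : (suppG (thresh S Λ)).Adj k j
        · rw [if_pos ha, if_pos ha, Wm_adj hSdiag hac ha.symm,
            thresh_symm hS hΛ j k]
          ring
        · rw [if_neg ha, if_neg ha, zero_mul, neg_zero]
      rw [Finset.sum_congr rfl step1, ← Finset.sum_neg_distrib]
      rw [Finset.sum_erase]
      simp [SimpleGraph.irrefl]
    rw [hfk, hrest]
    ring
  · rw [Matrix.one_apply_ne (Ne.symm hik)]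
    by_cases hreach : (suppG (thresh S Λ)).Reachable i k
    · obtain ⟨m0, hadj0, heq0, hrestρ⟩ := exists_m0 hac hreach (fun h => hik h.symm)
      have hm0i : m0 ≠ i := fun h => (suppG (thresh S Λ)).irrefl (h ▸ hadj0)
      have hhelp : ∀ rest : ℝ, 1 / S i i * (1 + rest) * Wm S Λ i k
          = Wm S Λ i k / S i i + rest * Wm S Λ i k / S i i := by
        intro rest
        field_simp
      have hf_i : Th0 S Λ i i * Wm S Λ i k
          = Wm S Λ i k / S i i + ∑ m, ((if (suppG (thresh S Λ)).Adj i m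
              then thresh S Λ i m ^ 2 / (S i i * S m m - thresh S Λ i m ^ 2) else 0)
                * Wm S Λ i k / S i i) := by
        rw [Th0, Matrix.of_apply, if_pos rfl, hhelp, Finset.sum_mul, Finset.sum_div]
      have hWm_other : ∀ m, (suppG (thresh S Λ)).Adj i m → m ≠ m0 →
          Wm S Λ m k = thresh S Λ i m * Wm S Λ i k / S i i := by
        intro m hadj hne
        simp only [Wm, Matrix.of_apply]
        rw [hrestρ m hadj hne, rwt, ← mul_assoc,
          sqrt_helper1 (thresh S Λ m i) (hSdiag m) (hSdiag i) (hSdiag k),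
          thresh_symm hS hΛ m i]
        ring
      have hWm_m0 : Wm S Λ m0 k = S m0 m0 * Wm S Λ i k / thresh S Λ i m0 := by
        have ht0 : thresh S Λ i m0 ≠ 0 := (adj_T_pos hS hΛ hadj0).ne'
        simp only [Wm, Matrix.of_apply]
        rw [heq0, rwt]
        rw [← sqrt_helper2 (thresh S Λ i m0) (rho S Λ m0 k)
          (hSdiag i) (hSdiag m0) (hSdiag k) ht0]
      rw [← Finset.add_sum_erase Finset.univ _ (Finset.mem_univ i), hf_i]
      have herase : ∑ j ∈ Finset.univ.erase i, Th0 S Λ i j * Wm S Λ j k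
          = ∑ j, (if j = i then 0 else Th0 S Λ i j * Wm S Λ j k) := by
        rw [← Finset.sum_erase (f := fun j => if j = i then 0
            else Th0 S Λ i j * Wm S Λ j k) (h := if_pos rfl)]
        apply Finset.sum_congr rfl
        intro j hj
        rw [if_neg (Finset.mem_erase.mp hj).1]
      rw [herase, add_assoc, ← Finset.sum_add_distrib]
      have hkey : ∀ m, ((if (suppG (thresh S Λ)).Adj i m
            then thresh S Λ i m ^ 2 / (S i i * S m m - thresh S Λ i m ^ 2) else 0)
              * Wm S Λ i k / S i i)
            + (if m = i then 0 else Th0 S Λ i m * Wm S Λ m k)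
          = if m = m0 then -(Wm S Λ i k / S i i) else 0 := by
        intro m
        by_cases hmi : m = i
        · subst hmi
          rw [if_pos rfl, if_neg (SimpleGraph.irrefl _), if_neg (Ne.symm hm0i)]
          simp
        · rw [if_neg hmi]
          by_cases hadj : (suppG (thresh S Λ)).Adj i m
          · have hTh : Th0 S Λ i m
                = -(thresh S Λ i m) / (S i i * S m m - thresh S Λ i m ^ 2) := by
              rw [Th0, Matrix.of_apply, if_neg (fun h => hmi h.symm), if_pos hadj]
            by_cases hm0 : m = m0
            · subst hm0
              rw [if_pos rfl, if_pos hadj, hTh, hWm_m0]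
              have hd : S i i * S m m - thresh S Λ i m ^ 2 ≠ 0 :=
                (delta_pos hS hΛ hΛnn hSdiag hA1 hadj).ne'
              have ht0 : thresh S Λ i m ≠ 0 := (adj_T_pos hS hΛ hadj).ne'
              have hs0 : S i i ≠ 0 := (hSdiag i).ne'
              field_simp
              ring
            · rw [if_neg hm0, if_pos hadj, hTh, hWm_other m hadj hm0]
              ring
          · rw [if_neg hadj, if_neg (fun h : m = m0 => hadj (h ▸ hadj0))]
            have hTh : Th0 S Λ i m = 0 := by
              rw [Th0, Matrix.of_apply, if_neg (fun h => hmi h.symm), if_neg hadj]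
            rw [hTh]
            simp
      rw [Finset.sum_congr rfl (fun m _ => hkey m), Finset.sum_ite_eq' Finset.univ m0]
      simp
    · apply Finset.sum_eq_zero
      intro j _
      by_cases hji : j = i
      · subst hji
        have : rho S Λ j k = 0 := rho_zero hreach
        rw [Wm, Matrix.of_apply, this, mul_zero, mul_zero]
      · by_cases hadj : (suppG (thresh S Λ)).Adj i j
        · have hjr : ¬ (suppG (thresh S Λ)).Reachable j k := by
            intro h
            exact hreach (hadj.reachable.trans h)
          rw [Wm, Matrix.of_apply, rho_zero hjr, mul_zero, mul_zero]
        · have hTh : Th0 S Λ i j = 0 := by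
            rw [Th0, Matrix.of_apply, if_neg (fun h => hji h.symm), if_neg hadj]
          rw [hTh, zero_mul]

end Inverse

section Root

variable {S Λ : Matrix (Fin p) (Fin p) ℝ}

def root (S Λ : Matrix (Fin p) (Fin p) ℝ) (i : Fin p) : Fin p :=
  ((suppG (thresh S Λ)).connectedComponentMk i).out

lemma reach_root (S Λ : Matrix (Fin p) (Fin p) ℝ) (i : Fin p) :
    (suppG (thresh S Λ)).Reachable i (root S Λ i) := by
  have h : (suppG (thresh S Λ)).connectedComponentMk (root S Λ i)
      = (suppG (thresh S Λ)).connectedComponentMk i := Quot.out_eq _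
  exact (SimpleGraph.ConnectedComponent.eq.mp h).symm

lemma root_eq {i j : Fin p} (h : (suppG (thresh S Λ)).Reachable i j) :
    root S Λ i = root S Λ j :=
  congrArg Quot.out (SimpleGraph.ConnectedComponent.sound h)

def pth (S Λ : Matrix (Fin p) (Fin p) ℝ) (i : Fin p) :
    (suppG (thresh S Λ)).Path i (root S Λ i) :=
  (Classical.choice (reach_root S Λ i)).toPath

lemma pth_eq (hac : (suppG (thresh S Λ)).IsAcyclic) {i : Fin p}
    (P : (suppG (thresh S Λ)).Walk i (root S Λ i)) (hP : P.IsPath) :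
    (pth S Λ i).1 = P :=
  congrArg Subtype.val (hac.path_unique (pth S Λ i) ⟨P, hP⟩)

def par (S Λ : Matrix (Fin p) (Fin p) ℝ) (i : Fin p) : Fin p :=
  if h : i = root S Λ i then i
  else Classical.choose ((pth S Λ i).1.exists_eq_cons_of_ne h)

lemma par_spec {i : Fin p} (hi : i ≠ root S Λ i) :
    ∃ (h : (suppG (thresh S Λ)).Adj i (par S Λ i))
      (Q : (suppG (thresh S Λ)).Walk (par S Λ i) (root S Λ i)),
      (pth S Λ i).1 = SimpleGraph.Walk.cons h Q := by
  rw [par, dif_neg hi]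
  exact Classical.choose_spec ((pth S Λ i).1.exists_eq_cons_of_ne hi)

lemma par_adj {i : Fin p} (hi : i ≠ root S Λ i) :
    (suppG (thresh S Λ)).Adj i (par S Λ i) :=
  (par_spec hi).choose

def lenr (S Λ : Matrix (Fin p) (Fin p) ℝ) (i : Fin p) : ℕ := ((pth S Λ i).1).length

lemma len_par (hac : (suppG (thresh S Λ)).IsAcyclic) {i : Fin p} (hi : i ≠ root S Λ i) :
    lenr S Λ (par S Λ i) + 1 = lenr S Λ i := by
  obtain ⟨h, Q, hcons⟩ := par_spec hi
  have hQpath : Q.IsPath := by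
    have h2 := (pth S Λ i).2
    rw [hcons] at h2
    exact h2.of_cons
  have hroot : root S Λ (par S Λ i) = root S Λ i := root_eq h.symm.reachable
  have hcopy : (Q.copy rfl hroot.symm).IsPath := by
    rw [SimpleGraph.Walk.isPath_copy]
    exact hQpath
  have heq := pth_eq hac (Q.copy rfl hroot.symm) hcopy
  have h1 : lenr S Λ (par S Λ i) = Q.length := by
    rw [lenr, heq, SimpleGraph.Walk.length_copy]
  have h2 : lenr S Λ i = Q.length + 1 := by
    rw [lenr, hcons, SimpleGraph.Walk.length_cons]
  omega

lemma cons_head_eq {G : SimpleGraph (Fin p)} {i k a b : Fin p} {h1 : G.Adj i a}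
    {P1 : G.Walk a k} {h2 : G.Adj i b} {P2 : G.Walk b k}
    (heq : SimpleGraph.Walk.cons h1 P1 = SimpleGraph.Walk.cons h2 P2) : a = b := by
  have h := congrArg SimpleGraph.Walk.support heq
  rw [SimpleGraph.Walk.support_cons, SimpleGraph.Walk.support_cons] at h
  have h4 := List.tail_eq_of_cons_eq h
  rw [P1.support_eq_cons, P2.support_eq_cons] at h4
  exact List.head_eq_of_cons_eq h4

/-- If `i` is a root and `m ~ i`, then `m` is not a root and `par m = i`. -/
lemma par_of_root (hac : (suppG (thresh S Λ)).IsAcyclic) {i m : Fin p}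
    (hadj : (suppG (thresh S Λ)).Adj i m) (hi : i = root S Λ i) :
    m ≠ root S Λ m ∧ par S Λ m = i := by
  have hrm : root S Λ m = i := by
    rw [root_eq hadj.symm.reachable, ← hi]
  have hm : m ≠ root S Λ m := by
    rw [hrm]; exact hadj.ne'
  refine ⟨hm, ?_⟩
  obtain ⟨h', Q', hcons⟩ := par_spec hm
  have hedge : ((SimpleGraph.Walk.cons hadj.symm (SimpleGraph.Walk.nil' i)).copy rfl
      hrm.symm).IsPath := by
    rw [SimpleGraph.Walk.isPath_copy]
    simp [SimpleGraph.Walk.cons_isPath_iff, hadj.ne']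
  have heq := pth_eq hac _ hedge
  rw [hcons] at heq
  have hsup := congrArg SimpleGraph.Walk.support heq
  rw [SimpleGraph.Walk.support_copy, SimpleGraph.Walk.support_cons,
    SimpleGraph.Walk.support_cons, SimpleGraph.Walk.support_nil] at hsup
  have h4 := List.tail_eq_of_cons_eq hsup
  rw [Q'.support_eq_cons] at h4
  exact List.head_eq_of_cons_eq h4

/-- If `i` is not a root, `m ~ i` and `m ≠ par i`, then `m` is not a root and `par m = i`. -/
lemma par_of_nonpar (hac : (suppG (thresh S Λ)).IsAcyclic) {i m : Fin p}
    (hadj : (suppG (thresh S Λ)).Adj i m) (hi : i ≠ root S Λ i)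
    (hm : m ≠ par S Λ i) : m ≠ root S Λ m ∧ par S Λ m = i := by
  obtain ⟨hpi, Qi, hconsi⟩ := par_spec hi
  have hPi : (SimpleGraph.Walk.cons hpi Qi).IsPath := by
    have h2 := (pth S Λ i).2; rw [hconsi] at h2; exact h2
  -- m is not on the path from i to root i
  have hnsup : m ∉ (SimpleGraph.Walk.cons hpi Qi).support := by
    intro hsup
    exact hm (snd_eq hac hpi Qi hPi hadj hsup).symm
  have hroots : root S Λ m = root S Λ i := root_eq hadj.symm.reachable
  have hmnr : m ≠ root S Λ m := by
    intro hmr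
    -- then root i = m and pth i would be the edge path i-m, so par i = m
    have hri : root S Λ i = m := by rw [← hroots, ← hmr]
    have hedge : ((SimpleGraph.Walk.cons hadj (SimpleGraph.Walk.nil' m)).copy rfl
        hri.symm).IsPath := by
      rw [SimpleGraph.Walk.isPath_copy]
      simp [SimpleGraph.Walk.cons_isPath_iff, hadj.ne]
    have heq := pth_eq hac _ hedge
    rw [hconsi] at heq
    have hsup := congrArg SimpleGraph.Walk.support heq
    rw [SimpleGraph.Walk.support_copy, SimpleGraph.Walk.support_cons,
      SimpleGraph.Walk.support_cons, SimpleGraph.Walk.support_nil] at hsup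
    have h4 := List.tail_eq_of_cons_eq hsup
    rw [Qi.support_eq_cons] at h4
    exact hm (List.head_eq_of_cons_eq h4).symm
  refine ⟨hmnr, ?_⟩
  obtain ⟨h', Q', hcons'⟩ := par_spec hmnr
  have hconsP : (SimpleGraph.Walk.cons hadj.symm (SimpleGraph.Walk.cons hpi Qi)).IsPath :=
    hPi.cons hnsup
  have hcopyP : ((SimpleGraph.Walk.cons hadj.symm (SimpleGraph.Walk.cons hpi Qi)).copy rfl
      hroots.symm).IsPath := by
    rw [SimpleGraph.Walk.isPath_copy]; exact hconsP
  have heq := pth_eq hac _ hcopyP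
  rw [hcons'] at heq
  have hsup := congrArg SimpleGraph.Walk.support heq
  rw [SimpleGraph.Walk.support_copy, SimpleGraph.Walk.support_cons,
    SimpleGraph.Walk.support_cons] at hsup
  have h4 := List.tail_eq_of_cons_eq hsup
  rw [Q'.support_eq_cons, SimpleGraph.Walk.support_eq_cons] at h4
  exact List.head_eq_of_cons_eq h4

/-- no 2-cycles in the parent map. -/
lemma par_no_cycle (hac : (suppG (thresh S Λ)).IsAcyclic) {i m : Fin p}
    (hi : i ≠ root S Λ i) (hm : m ≠ root S Λ m)
    (h1 : par S Λ i = m) (h2 : par S Λ m = i) : False := by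
  have l1 := len_par hac hi
  have l2 := len_par hac hm
  rw [h1] at l1
  rw [h2] at l2
  omega

/-- Partition of the neighbours of `i` into its parent and its children. -/
lemma neighbor_partition (hac : (suppG (thresh S Λ)).IsAcyclic) (g : Fin p → ℝ)
    (i m : Fin p) :
    (if (suppG (thresh S Λ)).Adj i m then g m else 0)
      = (if i ≠ root S Λ i ∧ m = par S Λ i then g m else 0)
        + (if m ≠ root S Λ m ∧ par S Λ m = i then g m else 0) := by
  by_cases hadj : (suppG (thresh S Λ)).Adj i m
  · rw [if_pos hadj]
    by_cases hi : i = root S Λ i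
    · obtain ⟨hmnr, hpm⟩ := par_of_root hac hadj hi
      rw [if_neg (fun h => h.1 hi), if_pos ⟨hmnr, hpm⟩]
      ring
    · by_cases hmp : m = par S Λ i
      · rw [if_pos ⟨hi, hmp⟩, if_neg]
        · ring
        · rintro ⟨hmnr, hpm⟩
          exact par_no_cycle hac hi hmnr hmp.symm hpm
      · obtain ⟨hmnr, hpm⟩ := par_of_nonpar hac hadj hi hmp
        rw [if_neg (fun h => hmp h.2), if_pos ⟨hmnr, hpm⟩]
        ring
  · rw [if_neg hadj, if_neg, if_neg]
    · ring
    · rintro ⟨hmnr, hpm⟩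
      exact hadj ((hpm ▸ par_adj hmnr).symm)
    · rintro ⟨hinr, hpi⟩
      exact hadj (hpi ▸ par_adj hinr)

end Root

section Fact

variable {S Λ : Matrix (Fin p) (Fin p) ℝ}

def Bm (S Λ : Matrix (Fin p) (Fin p) ℝ) : Matrix (Fin p) (Fin p) ℝ :=
  Matrix.of fun j i =>
    if j = root S Λ j then (if i = j then 1 / Real.sqrt (S j j) else 0)
    else if i = j then
      1 / (Real.sqrt (S j j) * Real.sqrt (1 - rwt S Λ j (par S Λ j) ^ 2))
    else if i = par S Λ j then
      -(rwt S Λ j (par S Λ j)) / (Real.sqrt (S (par S Λ j) (par S Λ j))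
        * Real.sqrt (1 - rwt S Λ j (par S Λ j) ^ 2))
    else 0

variable (hS : S.IsSymm) (hΛ : Λ.IsSymm) (hΛnn : ∀ i j, 0 ≤ Λ i j)
  (hSdiag : ∀ i, 0 < S i i)
  (hA1 : ∀ i j, i ≠ j → S i j < Real.sqrt (S i i * S j j))

include hS hΛ hΛnn hSdiag hA1 in
lemma q_pos {a b : Fin p} (hadj : (suppG (thresh S Λ)).Adj a b) :
    0 < 1 - rwt S Λ a b ^ 2 := by
  have h1 := rwt_pos hS hΛ hSdiag hadj
  have h2 := rwt_lt_one hS hΛ hΛnn hSdiag hA1 hadj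
  nlinarith

include hS hΛ hΛnn hSdiag hA1 in
lemma rq_eq {a b : Fin p} (hadj : (suppG (thresh S Λ)).Adj a b) :
    rwt S Λ a b ^ 2 / (1 - rwt S Λ a b ^ 2)
      = thresh S Λ a b ^ 2 / (S a a * S b b - thresh S Λ a b ^ 2) := by
  have hA : (0:ℝ) < S a a * S b b := mul_pos (hSdiag a) (hSdiag b)
  have hd := delta_pos hS hΛ hΛnn hSdiag hA1 hadj
  have hq := q_pos hS hΛ hΛnn hSdiag hA1 hadj
  rw [rwt_sq hS hΛ hΛnn hSdiag a b] at *
  field_simp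
  rw [mul_div_assoc, sub_div, div_self hA.ne']

lemma sq1 {s q : ℝ} (hs : 0 < s) (hq : 0 < q) :
    1 / (Real.sqrt s * Real.sqrt q) * (1 / (Real.sqrt s * Real.sqrt q)) = 1 / (s * q) := by
  rw [div_mul_div_comm, one_mul]
  congr 1
  rw [mul_mul_mul_comm, Real.mul_self_sqrt hs.le, Real.mul_self_sqrt hq.le]

lemma sq2 {sp q : ℝ} (r : ℝ) (hsp : 0 < sp) (hq : 0 < q) :
    -r / (Real.sqrt sp * Real.sqrt q) * (-r / (Real.sqrt sp * Real.sqrt q))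
      = r ^ 2 / (sp * q) := by
  rw [div_mul_div_comm]
  rw [mul_mul_mul_comm, Real.mul_self_sqrt hsp.le, Real.mul_self_sqrt hq.le]
  ring

lemma sq3 {s sp q : ℝ} (r : ℝ) (hs : 0 < s) (hsp : 0 < sp) (hq : 0 < q) :
    1 / (Real.sqrt s * Real.sqrt q) * (-r / (Real.sqrt sp * Real.sqrt q))
      = -r / (Real.sqrt s * Real.sqrt sp * q) := by
  rw [div_mul_div_comm, one_mul]
  congr 1
  rw [mul_mul_mul_comm, Real.mul_self_sqrt hq.le]

include hS hΛ hΛnn hSdiag hA1 in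
lemma conv3 {a b : Fin p} (hadj : (suppG (thresh S Λ)).Adj a b) :
    -(rwt S Λ a b) / (Real.sqrt (S a a) * Real.sqrt (S b b) * (1 - rwt S Λ a b ^ 2))
      = -(thresh S Λ a b) / (S a a * S b b - thresh S Λ a b ^ 2) := by
  have hA : (0:ℝ) < S a a * S b b := mul_pos (hSdiag a) (hSdiag b)
  have hd := delta_pos hS hΛ hΛnn hSdiag hA1 hadj
  have hq := q_pos hS hΛ hΛnn hSdiag hA1 hadj
  have hsq : Real.sqrt (S a a) * Real.sqrt (S b b) = Real.sqrt (S a a * S b b) :=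
    (Real.sqrt_mul (hSdiag a).le _).symm
  have hq' : 1 - (thresh S Λ a b / Real.sqrt (S a a * S b b)) ^ 2
      = (S a a * S b b - thresh S Λ a b ^ 2) / (S a a * S b b) := by
    rw [div_pow, Real.sq_sqrt hA.le]
    field_simp
    rw [sub_div, div_self hA.ne']
  rw [rwt, hsq, hq']
  rw [div_eq_div_iff (by positivity) hd.ne']
  have ha := hSdiag a
  have hb := hSdiag b
  field_simp
  linear_combination (thresh S Λ a b) * (Real.sq_sqrt hA.le)

end Fact

section Fact2

variable {S Λ : Matrix (Fin p) (Fin p) ℝ}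

lemma Bm_root_self {j : Fin p} (hjr : j = root S Λ j) :
    Bm S Λ j j = 1 / Real.sqrt (S j j) := by
  show (if j = root S Λ j then _ else _) = _
  rw [if_pos hjr, if_pos rfl]

lemma Bm_root_off {i j : Fin p} (hjr : j = root S Λ j) (hne : i ≠ j) :
    Bm S Λ j i = 0 := by
  show (if j = root S Λ j then _ else _) = _
  rw [if_pos hjr, if_neg hne]

lemma Bm_self {j : Fin p} (hjr : j ≠ root S Λ j) :
    Bm S Λ j j = 1 / (Real.sqrt (S j j) * Real.sqrt (1 - rwt S Λ j (par S Λ j) ^ 2)) := by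
  show (if j = root S Λ j then _ else _) = _
  rw [if_neg hjr, if_pos rfl]

lemma Bm_par {i j : Fin p} (hjr : j ≠ root S Λ j) (hpj : i = par S Λ j) :
    Bm S Λ j i = -(rwt S Λ j (par S Λ j)) / (Real.sqrt (S (par S Λ j) (par S Λ j))
      * Real.sqrt (1 - rwt S Λ j (par S Λ j) ^ 2)) := by
  have hne : i ≠ j := by
    rw [hpj]
    exact fun h => (suppG (thresh S Λ)).irrefl (h ▸ par_adj hjr)
  show (if j = root S Λ j then _ else _) = _
  rw [if_neg hjr, if_neg hne, if_pos hpj]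

lemma Bm_zero {i j : Fin p} (hjr : j ≠ root S Λ j) (hne : i ≠ j)
    (hnp : i ≠ par S Λ j) : Bm S Λ j i = 0 := by
  show (if j = root S Λ j then _ else _) = _
  rw [if_neg hjr, if_neg hne, if_neg hnp]

variable (hS : S.IsSymm) (hΛ : Λ.IsSymm) (hΛnn : ∀ i j, 0 ≤ Λ i j)
  (hSdiag : ∀ i, 0 < S i i)
  (hA1 : ∀ i j, i ≠ j → S i j < Real.sqrt (S i i * S j j))

include hS hΛ hΛnn hSdiag hA1 in
lemma conv2 {a b : Fin p} (hadj : (suppG (thresh S Λ)).Adj a b) :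
    1 / (S a a * (1 - rwt S Λ a b ^ 2))
      = (1 / S a a) * (1 + thresh S Λ a b ^ 2 / (S a a * S b b - thresh S Λ a b ^ 2)) := by
  have hq := q_pos hS hΛ hΛnn hSdiag hA1 hadj
  rw [← rq_eq hS hΛ hΛnn hSdiag hA1 hadj]
  have hs := hSdiag a
  field_simp
  ring

include hS hΛ hΛnn hSdiag hA1 in
lemma conv1 {i j : Fin p} (hadj : (suppG (thresh S Λ)).Adj j i) :
    rwt S Λ j i ^ 2 / (S i i * (1 - rwt S Λ j i ^ 2))
      = (1 / S i i) * (thresh S Λ i j ^ 2 / (S i i * S j j - thresh S Λ i j ^ 2)) := by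
  have hq := q_pos hS hΛ hΛnn hSdiag hA1 hadj
  have h := rq_eq hS hΛ hΛnn hSdiag hA1 hadj
  rw [thresh_symm hS hΛ i j, mul_comm (S i i) (S j j), ← h]
  have hs := hSdiag i
  field_simp

include hS hΛ hΛnn hSdiag hA1 in
lemma Th0_fact (hac : (suppG (thresh S Λ)).IsAcyclic) :
    Th0 S Λ = (Bm S Λ)ᵀ * Bm S Λ := by
  ext i k
  rw [Matrix.mul_apply]
  simp only [Matrix.transpose_apply]
  by_cases hik : k = i
  · subst hik
    have point : ∀ j, Bm S Λ j k * Bm S Λ j k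
        = (if j = k then (if k = root S Λ k then 1 / S k k
            else (1 / S k k) * (1 + thresh S Λ k (par S Λ k) ^ 2
              / (S k k * S (par S Λ k) (par S Λ k) - thresh S Λ k (par S Λ k) ^ 2))) else 0)
          + (if j ≠ root S Λ j ∧ par S Λ j = k then
              (1 / S k k) * (thresh S Λ k j ^ 2 / (S k k * S j j - thresh S Λ k j ^ 2))
            else 0) := by
      intro j
      by_cases hjk : j = k
      · subst hjk
        have hsecond : ¬(j ≠ root S Λ j ∧ par S Λ j = j) := by
          rintro ⟨hnr, hpj⟩
          exact (suppG (thresh S Λ)).irrefl (hpj ▸ par_adj hnr)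
        rw [if_pos rfl, if_neg hsecond, add_zero]
        by_cases hr : j = root S Λ j
        · rw [if_pos hr, Bm_root_self hr, div_mul_div_comm, one_mul,
            Real.mul_self_sqrt (hSdiag j).le]
        · have hadjp := par_adj hr
          rw [if_neg hr, Bm_self hr,
            sq1 (hSdiag j) (q_pos hS hΛ hΛnn hSdiag hA1 hadjp),
            conv2 hS hΛ hΛnn hSdiag hA1 hadjp]
      · rw [if_neg hjk, zero_add]
        by_cases hjr : j = root S Λ j
        · rw [Bm_root_off hjr (fun h => hjk h.symm), zero_mul, if_neg (fun h => h.1 hjr)]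
        · by_cases hpj : k = par S Λ j
          · have hadjj : (suppG (thresh S Λ)).Adj j k := by
              rw [hpj]; exact par_adj hjr
            rw [Bm_par hjr hpj, if_pos ⟨hjr, hpj.symm⟩, ← hpj,
              sq2 _ (hSdiag k) (by rw [hpj]; exact q_pos hS hΛ hΛnn hSdiag hA1 (par_adj hjr))]
            exact conv1 hS hΛ hΛnn hSdiag hA1 hadjj
          · rw [Bm_zero hjr (fun h => hjk h.symm) hpj, zero_mul,
              if_neg (fun h => hpj h.2.symm)]
    rw [Finset.sum_congr rfl (fun j _ => point j), Finset.sum_add_distrib,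
      Finset.sum_ite_eq' Finset.univ k]
    simp only [Finset.mem_univ, if_true]
    rw [Th0, Matrix.of_apply, if_pos rfl]
    rw [Finset.sum_congr rfl (fun m _ => neighbor_partition hac
      (fun m => thresh S Λ k m ^ 2 / (S k k * S m m - thresh S Λ k m ^ 2)) k m),
      Finset.sum_add_distrib]
    have e1 : ∑ m, (if k ≠ root S Λ k ∧ m = par S Λ k then
          thresh S Λ k m ^ 2 / (S k k * S m m - thresh S Λ k m ^ 2) else 0)
        = (if k = root S Λ k then 0 else thresh S Λ k (par S Λ k) ^ 2
            / (S k k * S (par S Λ k) (par S Λ k) - thresh S Λ k (par S Λ k) ^ 2)) := by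
      by_cases hk : k = root S Λ k
      · rw [if_pos hk]
        apply Finset.sum_eq_zero
        intro m _
        rw [if_neg (fun h => h.1 hk)]
      · rw [if_neg hk]
        have e0 : ∀ m, (if k ≠ root S Λ k ∧ m = par S Λ k then
              thresh S Λ k m ^ 2 / (S k k * S m m - thresh S Λ k m ^ 2) else 0)
            = (if m = par S Λ k then
              thresh S Λ k m ^ 2 / (S k k * S m m - thresh S Λ k m ^ 2) else 0) := by
          intro m
          by_cases hm : m = par S Λ k
          · rw [if_pos ⟨hk, hm⟩, if_pos hm]
          · rw [if_neg (fun h => hm h.2), if_neg hm]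
        rw [Finset.sum_congr rfl (fun m _ => e0 m), Finset.sum_ite_eq' Finset.univ (par S Λ k)]
        simp
    rw [e1]
    have e2 : ∑ j, (if j ≠ root S Λ j ∧ par S Λ j = k then
          (1 / S k k) * (thresh S Λ k j ^ 2 / (S k k * S j j - thresh S Λ k j ^ 2)) else 0)
        = (1 / S k k) * ∑ m, (if m ≠ root S Λ m ∧ par S Λ m = k then
            thresh S Λ k m ^ 2 / (S k k * S m m - thresh S Λ k m ^ 2) else 0) := by
      rw [Finset.mul_sum]
      apply Finset.sum_congr rfl
      intro m _
      rw [mul_ite, mul_zero]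
    rw [e2]
    by_cases hk : k = root S Λ k
    · rw [if_pos hk, if_pos hk]
      ring
    · rw [if_neg hk, if_neg hk]
      ring
  · -- off-diagonal case
    have hki : k ≠ i := hik
    have point : ∀ j, Bm S Λ j i * Bm S Λ j k
        = (if j = i then (if i ≠ root S Λ i ∧ par S Λ i = k then
            -(thresh S Λ i k) / (S i i * S k k - thresh S Λ i k ^ 2) else 0) else 0)
          + (if j = k then (if k ≠ root S Λ k ∧ par S Λ k = i then
            -(thresh S Λ i k) / (S i i * S k k - thresh S Λ i k ^ 2) else 0) else 0) := by
      intro j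
      by_cases hji : j = i
      · subst hji
        rw [if_pos rfl, if_neg (fun h : j = k => hki h.symm), add_zero]
        by_cases hjr : j = root S Λ j
        · rw [Bm_root_off hjr hki, mul_zero, if_neg (fun h => h.1 hjr)]
        · by_cases hpk : k = par S Λ j
          · have hadjj : (suppG (thresh S Λ)).Adj j k := by
              rw [hpk]; exact par_adj hjr
            have hq' : 0 < 1 - rwt S Λ j k ^ 2 := q_pos hS hΛ hΛnn hSdiag hA1 hadjj
            rw [Bm_self hjr, Bm_par hjr hpk, if_pos ⟨hjr, hpk.symm⟩, ← hpk,
              sq3 _ (hSdiag j) (hSdiag k) hq']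
            exact conv3 hS hΛ hΛnn hSdiag hA1 hadjj
          · rw [Bm_zero hjr hki hpk, mul_zero, if_neg (fun h => hpk h.2.symm)]
      · rw [if_neg hji, zero_add]
        by_cases hjk : j = k
        · subst hjk
          rw [if_pos rfl]
          by_cases hjr : j = root S Λ j
          · rw [Bm_root_off hjr (fun h => hji h.symm), zero_mul, if_neg (fun h => h.1 hjr)]
          · by_cases hpi : i = par S Λ j
            · have hadjj : (suppG (thresh S Λ)).Adj j i := by
                rw [hpi]; exact par_adj hjr
              have hq' : 0 < 1 - rwt S Λ j i ^ 2 := q_pos hS hΛ hΛnn hSdiag hA1 hadjj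
              rw [Bm_self hjr, Bm_par hjr hpi, if_pos ⟨hjr, hpi.symm⟩, ← hpi]
              rw [mul_comm (-(rwt S Λ j i) / (Real.sqrt (S i i)
                  * Real.sqrt (1 - rwt S Λ j i ^ 2))), sq3 _ (hSdiag j) (hSdiag i) hq',
                conv3 hS hΛ hΛnn hSdiag hA1 hadjj,
                thresh_symm hS hΛ j i, mul_comm (S j j) (S i i)]
            · rw [Bm_zero hjr (fun h => hji h.symm) hpi, zero_mul,
                if_neg (fun h => hpi h.2.symm)]
        · rw [if_neg hjk]
          by_cases hjr : j = root S Λ j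
          · rw [Bm_root_off hjr (fun h => hji h.symm), zero_mul]
          · by_cases hpi : i = par S Λ j
            · have hpk : ¬ k = par S Λ j := fun h => hki (h.trans hpi.symm)
              rw [Bm_zero hjr (fun h => hjk h.symm) hpk, mul_zero]
            · rw [Bm_zero hjr (fun h => hji h.symm) hpi, zero_mul]
    rw [Finset.sum_congr rfl (fun j _ => point j), Finset.sum_add_distrib,
      Finset.sum_ite_eq' Finset.univ i, Finset.sum_ite_eq' Finset.univ k]
    simp only [Finset.mem_univ, if_true]
    rw [Th0, Matrix.of_apply, if_neg (fun h => hki h.symm)]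
    by_cases hadj : (suppG (thresh S Λ)).Adj i k
    · rw [if_pos hadj]
      by_cases hi : i = root S Λ i
      · obtain ⟨hknr, hpk⟩ := par_of_root hac hadj hi
        rw [if_neg (fun h => h.1 hi), if_pos ⟨hknr, hpk⟩, zero_add]
      · by_cases hkp : k = par S Λ i
        · rw [if_pos ⟨hi, hkp.symm⟩, if_neg, add_zero]
          rintro ⟨hknr, hpk2⟩
          exact par_no_cycle hac hi hknr hkp.symm hpk2
        · obtain ⟨hknr, hpk⟩ := par_of_nonpar hac hadj hi hkp
          rw [if_neg (fun h => hkp h.2.symm), if_pos ⟨hknr, hpk⟩, zero_add]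
    · rw [if_neg hadj, if_neg, if_neg, add_zero]
      · rintro ⟨hknr, hpk⟩
        exact hadj (hpk ▸ par_adj hknr).symm
      · rintro ⟨hinr, hpi⟩
        exact hadj (hpi ▸ par_adj hinr)

end Fact2


section PD

variable {S Λ : Matrix (Fin p) (Fin p) ℝ}
variable (hS : S.IsSymm) (hΛ : Λ.IsSymm) (hΛnn : ∀ i j, 0 ≤ Λ i j)
  (hSdiag : ∀ i, 0 < S i i)
  (hA1 : ∀ i j, i ≠ j → S i j < Real.sqrt (S i i * S j j))

include hS hΛ hΛnn hSdiag hA1 in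
lemma Bm_ker (hac : (suppG (thresh S Λ)).IsAcyclic) {x : Fin p → ℝ}
    (hx : Bm S Λ *ᵥ x = 0) : x = 0 := by
  have key : ∀ n : ℕ, ∀ i : Fin p, lenr S Λ i = n → x i = 0 := by
    intro n
    induction n using Nat.strong_induction_on with
    | _ n ih =>
      intro i hlen
      have h0 : ∑ jj, Bm S Λ i jj * x jj = 0 := by
        have := congrFun hx i
        simpa [Matrix.mulVec, dotProduct] using this
      by_cases hr : i = root S Λ i
      · have hpt : ∀ jj, Bm S Λ i jj * x jj
            = (if jj = i then (1 / Real.sqrt (S i i)) * x jj else 0) := by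
          intro jj
          by_cases hji : jj = i
          · subst hji
            rw [if_pos rfl, Bm_root_self hr]
          · rw [if_neg hji, Bm_root_off hr hji, zero_mul]
        rw [Finset.sum_congr rfl (fun jj _ => hpt jj),
          Finset.sum_ite_eq' Finset.univ i] at h0
        simp only [Finset.mem_univ, if_true] at h0
        have hs : (1:ℝ) / Real.sqrt (S i i) ≠ 0 :=
          one_div_ne_zero (ne_of_gt (Real.sqrt_pos.mpr (hSdiag i)))
        exact (mul_eq_zero.mp h0).resolve_left hs
      · have hadjp := par_adj hr
        have hq := q_pos hS hΛ hΛnn hSdiag hA1 hadjp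
        have hpar_ne : par S Λ i ≠ i :=
          fun h => (suppG (thresh S Λ)).irrefl (h ▸ hadjp)
        have hxp : x (par S Λ i) = 0 := by
          have hl := len_par hac hr
          exact ih (lenr S Λ (par S Λ i)) (by omega) _ rfl
        have hpt : ∀ jj, Bm S Λ i jj * x jj
            = (if jj = i then (1 / (Real.sqrt (S i i)
                * Real.sqrt (1 - rwt S Λ i (par S Λ i) ^ 2))) * x jj else 0)
              + (if jj = par S Λ i then (-(rwt S Λ i (par S Λ i))
                  / (Real.sqrt (S (par S Λ i) (par S Λ i))
                    * Real.sqrt (1 - rwt S Λ i (par S Λ i) ^ 2))) * x jj else 0) := by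
          intro jj
          by_cases hji : jj = i
          · subst hji
            rw [if_pos rfl, if_neg (fun h => hpar_ne h.symm), add_zero, Bm_self hr]
          · rw [if_neg hji]
            by_cases hjp : jj = par S Λ i
            · rw [if_pos hjp, Bm_par hr hjp, zero_add]
            · rw [if_neg hjp, Bm_zero hr hji hjp, zero_mul, add_zero]
        rw [Finset.sum_congr rfl (fun jj _ => hpt jj), Finset.sum_add_distrib,
          Finset.sum_ite_eq' Finset.univ i, Finset.sum_ite_eq' Finset.univ (par S Λ i)] at h0
        simp only [Finset.mem_univ, if_true] at h0
        rw [hxp, mul_zero, add_zero] at h0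
        have hs : (1:ℝ) / (Real.sqrt (S i i) * Real.sqrt (1 - rwt S Λ i (par S Λ i) ^ 2)) ≠ 0 :=
          one_div_ne_zero (ne_of_gt (mul_pos (Real.sqrt_pos.mpr (hSdiag i))
            (Real.sqrt_pos.mpr hq)))
        exact (mul_eq_zero.mp h0).resolve_left hs
  funext i
  exact key (lenr S Λ i) i rfl

include hS hΛ hΛnn hSdiag hA1 in
lemma Th0_posdef (hac : (suppG (thresh S Λ)).IsAcyclic) : (Th0 S Λ).PosDef := by
  have hfact := Th0_fact hS hΛ hΛnn hSdiag hA1 hac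
  refine Matrix.PosDef.of_dotProduct_mulVec_pos ?_ ?_
  · show (Th0 S Λ)ᴴ = Th0 S Λ
    ext i j
    rw [Matrix.conjTranspose_apply, star_trivial]
    exact Th0_symm_apply hS hΛ j i
  · intro x hx
    have hBx : Bm S Λ *ᵥ x ≠ 0 := fun h => hx (Bm_ker hS hΛ hΛnn hSdiag hA1 hac h)
    have hdot : star x ⬝ᵥ (Th0 S Λ *ᵥ x) = (Bm S Λ *ᵥ x) ⬝ᵥ (Bm S Λ *ᵥ x) := by
      rw [hfact, ← Matrix.mulVec_mulVec, dotProduct_mulVec, Matrix.vecMul_transpose,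
        star_trivial]
    rw [hdot]
    obtain ⟨i0, hi0⟩ := Function.ne_iff.mp hBx
    rw [dotProduct]
    apply Finset.sum_pos'
    · intro i _
      exact mul_self_nonneg _
    · exact ⟨i0, Finset.mem_univ _, mul_self_pos.mpr (by simpa using hi0)⟩

include hS hΛ hΛnn hSdiag hA1 in
lemma Th0_MSet (hac : (suppG (thresh S Λ)).IsAcyclic) : MSet (Th0 S Λ) := by
  refine ⟨?_, Th0_posdef hS hΛ hΛnn hSdiag hA1 hac, ?_⟩
  · show (Th0 S Λ)ᵀ = Th0 S Λ
    ext i j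
    rw [Matrix.transpose_apply]
    exact Th0_symm_apply hS hΛ j i
  · intro i j hne
    exact Th0_offdiag_nonpos hS hΛ hΛnn hSdiag hA1 hne

lemma thresh_eq_of_adj (hS : S.IsSymm) (hΛ : Λ.IsSymm) {i j : Fin p}
    (h : (suppG (thresh S Λ)).Adj i j) : thresh S Λ i j = S i j - Λ i j := by
  obtain ⟨hne, hpos⟩ := (adj_iff hS hΛ).mp h
  by_cases hc : i ≠ j ∧ Λ i j < S i j
  · rw [thresh, Matrix.of_apply, if_pos hc]
  · exfalso
    have : thresh S Λ i j = 0 := by rw [thresh, Matrix.of_apply, if_neg hc]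
    rw [this] at hpos
    exact lt_irrefl 0 hpos

lemma SL_nonpos_of_nonadj (hS : S.IsSymm) (hΛ : Λ.IsSymm) {i j : Fin p} (hne : i ≠ j)
    (h : ¬ (suppG (thresh S Λ)).Adj i j) : S i j - Λ i j ≤ 0 := by
  by_contra hcon
  push_neg at hcon
  have hadj : (suppG (thresh S Λ)).Adj i j := by
    rw [adj_iff hS hΛ]
    refine ⟨hne, ?_⟩
    rw [thresh, Matrix.of_apply, if_pos ⟨hne, by linarith⟩]
    linarith
  exact h hadj

lemma objf_eq (hΛ : Λ.IsSymm) (hΛdiag : ∀ i, Λ i i = 0) {Θ : Matrix (Fin p) (Fin p) ℝ}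
    (hΘ : MSet Θ) : objf S Λ Θ = -Real.log Θ.det + (Θ * (S - Λ)).trace := by
  rw [objf, Matrix.mul_sub, Matrix.trace_sub]
  have h1 : ∑ i, ∑ j, (if i = j then 0 else Λ i j * |Θ i j|) = - (Θ * Λ).trace := by
    rw [Matrix.trace, ← Finset.sum_neg_distrib]
    apply Finset.sum_congr rfl
    intro i _
    rw [Matrix.diag_apply, Matrix.mul_apply, ← Finset.sum_neg_distrib]
    apply Finset.sum_congr rfl
    intro j _
    by_cases hij : i = j
    · rw [if_pos hij, ← hij, hΛdiag i, mul_zero, neg_zero]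
    · rw [if_neg hij, abs_of_nonpos (hΘ.2.2 i j hij), ← hΛ.apply j i]
      ring
  rw [h1]
  ring

end PD

end Stmt6

open Stmt6 in
/-- Corollary 2: closed-form solution for acyclic thresholded graphs. -/
theorem stmt_6 {p : ℕ} (hp : 1 ≤ p)
    (S Λ : Matrix (Fin p) (Fin p) ℝ)
    (hSsymm : S.IsSymm) (hΛsymm : Λ.IsSymm)
    (hSdiag : ∀ i, 0 < S i i) (hΛnn : ∀ i j, 0 ≤ Λ i j) (hΛdiag : ∀ i, Λ i i = 0)
    (hA1 : ∀ i j, i ≠ j → S i j < Real.sqrt (S i i * S j j))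
    (Θstar : Matrix (Fin p) (Fin p) ℝ)
    (hmem : MSet Θstar)
    (hmin : ∀ Θ' : Matrix (Fin p) (Fin p) ℝ, MSet Θ' → objf S Λ Θstar ≤ objf S Λ Θ')
    (hacyclic : (suppG (thresh S Λ)).IsAcyclic) :
    (∀ i, Θstar i i = (1 / S i i) *
        (1 + ∑ m, if (suppG (thresh S Λ)).Adj i m
          then thresh S Λ i m ^ 2 / (S i i * S m m - thresh S Λ i m ^ 2) else 0)) ∧
    (∀ i j, (suppG (thresh S Λ)).Adj i j →
      Θstar i j = -(thresh S Λ i j) / (S i i * S j j - thresh S Λ i j ^ 2)) ∧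
    (∀ i j, i ≠ j → ¬(suppG (thresh S Λ)).Adj i j → Θstar i j = 0) := by
  classical
  have hpd : (Th0 S Λ).PosDef := Th0_posdef hSsymm hΛsymm hΛnn hSdiag hA1 hacyclic
  have hmemT : MSet (Th0 S Λ) := Th0_MSet hSsymm hΛsymm hΛnn hSdiag hA1 hacyclic
  have hinvmul : Th0 S Λ * Wm S Λ = 1 := Th0_mul_Wm hSsymm hΛsymm hΛnn hSdiag hA1 hacyclic
  have hWinv : (Th0 S Λ)⁻¹ = Wm S Λ := Matrix.inv_eq_right_inv hinvmul
  have hobj1 : objf S Λ Θstar = -Real.log Θstar.det + (Θstar * (S - Λ)).trace :=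
    objf_eq hΛsymm hΛdiag hmem
  have hobj0 : objf S Λ (Th0 S Λ) = -Real.log (Th0 S Λ).det + (Th0 S Λ * (S - Λ)).trace :=
    objf_eq hΛsymm hΛdiag hmemT
  have hminle : objf S Λ Θstar ≤ objf S Λ (Th0 S Λ) := hmin _ hmemT
  obtain ⟨hD0, hDeq⟩ := key_logdet hpd hmem.2.1
  -- the trace term is nonnegative
  have htr : 0 ≤ ((Θstar - Th0 S Λ) * ((S - Λ) - Wm S Λ)).trace := by
    rw [Matrix.trace]
    apply Finset.sum_nonneg
    intro i _
    rw [Matrix.diag_apply, Matrix.mul_apply]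
    apply Finset.sum_nonneg
    intro j _
    by_cases hji : j = i
    · subst hji
      have h2 : ((S - Λ) - Wm S Λ) j j = 0 := by
        rw [Matrix.sub_apply, Matrix.sub_apply, Wm_diag hSdiag hacyclic, hΛdiag]
        ring
      rw [h2, mul_zero]
    · by_cases hadj : (suppG (thresh S Λ)).Adj j i
      · have h2 : ((S - Λ) - Wm S Λ) j i = 0 := by
          rw [Matrix.sub_apply, Matrix.sub_apply, Wm_adj hSdiag hacyclic hadj,
            thresh_eq_of_adj hSsymm hΛsymm hadj]
          ring
        rw [h2, mul_zero]
      · have h1 : (Θstar - Th0 S Λ) i j ≤ 0 := by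
          rw [Matrix.sub_apply]
          have hTh0 : Th0 S Λ i j = 0 := by
            rw [Th0, Matrix.of_apply, if_neg (fun h => hji h.symm),
              if_neg (fun h => hadj h.symm)]
          rw [hTh0, sub_zero]
          exact hmem.2.2 i j (fun h => hji h.symm)
        have h2 : ((S - Λ) - Wm S Λ) j i ≤ 0 := by
          rw [Matrix.sub_apply, Matrix.sub_apply]
          have := SL_nonpos_of_nonadj hSsymm hΛsymm hji hadj
          have := Wm_nonneg hSsymm hΛsymm hSdiag j i
          linarith
        nlinarith [h1, h2]
  -- the decomposition identity
  have hiden : objf S Λ Θstar - objf S Λ (Th0 S Λ)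
      = (Real.log (Th0 S Λ).det - Real.log Θstar.det
          + (((Th0 S Λ)⁻¹ * Θstar).trace - Fintype.card (Fin p)))
        + ((Θstar - Th0 S Λ) * ((S - Λ) - Wm S Λ)).trace := by
    rw [hobj1, hobj0, hWinv]
    have h1 : (Θstar - Th0 S Λ) * ((S - Λ) - Wm S Λ)
        = Θstar * (S - Λ) - Θstar * Wm S Λ - Th0 S Λ * (S - Λ) + Th0 S Λ * Wm S Λ := by
      noncomm_ring
    rw [h1, Matrix.trace_add, Matrix.trace_sub, Matrix.trace_sub, hinvmul, Matrix.trace_one,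
      Matrix.trace_mul_comm (Wm S Λ) Θstar, Fintype.card_fin]
    ring
  have hDz : Real.log (Th0 S Λ).det - Real.log Θstar.det
      + (((Th0 S Λ)⁻¹ * Θstar).trace - Fintype.card (Fin p)) = 0 := by
    linarith
  have hfinal : Θstar = Th0 S Λ := hDeq hDz
  refine ⟨?_, ?_, ?_⟩
  · intro i
    rw [hfinal, Th0, Matrix.of_apply, if_pos rfl]
  · intro i j hadj
    have hne : i ≠ j := hadj.ne
    rw [hfinal, Th0, Matrix.of_apply, if_neg hne, if_pos hadj]
  · intro i j hne hadj
    rw [hfinal, Th0, Matrix.of_apply, if_neg hne, if_neg hadj]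
end
end

section
/- Let G be a simple graph on a finite vertex set and let i and j be two vertices. If W₁ and W₂ are two paths from i to j in G (walks with no repeated vertices), then the set of edges of W₁ that are bridges of G is equal to the set of edges of W₂ that are bridges of G. In particular, every path from i to j traverses exactly the same bridges of G. -/
attribute [local instance] Classical.propDecidable

noncomputable section

open Matrix

private lemma bridge_not_reachable_aux {V : Type*} (G : SimpleGraph V) {e : Sym2 V}
    (hb : G.IsBridge e) : ∀ {i j : V} (W : G.Walk i j), W.IsPath → e ∈ W.edges →
    ¬ (G \ SimpleGraph.fromEdgeSet {e}).Reachable i j := by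
  intro i j W
  induction W with
  | nil => simp
  | @cons u v w h p ih =>
    intro hp he hr
    rw [SimpleGraph.Walk.edges_cons, List.mem_cons] at he
    have hp' : p.IsPath := hp.of_cons
    have hus : u ∉ p.support := ((SimpleGraph.Walk.cons_isPath_iff _ _).mp hp).2
    have huv : s(u, v) ∉ p.edges := fun hc =>
      hus (SimpleGraph.Walk.fst_mem_support_of_mem_edges p hc)
    rcases he with he | he
    · -- e = s(u,v)
      have hne : e ∉ p.edges := he ▸ huv
      have hrv : (G \ SimpleGraph.fromEdgeSet {e}).Reachable v w :=
        ⟨p.toDeleteEdges {e} (fun e' he' hee' => hne (hee' ▸ he'))⟩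
      have : ¬ (G \ SimpleGraph.fromEdgeSet {s(u, v)}).Reachable u v :=
        (SimpleGraph.isBridge_iff).mp (he ▸ hb)
      exact this (he ▸ hr.trans hrv.symm)
    · -- e ∈ p.edges
      have hne : s(u, v) ≠ e := fun hc => huv (hc ▸ he)
      have hadj : (G \ SimpleGraph.fromEdgeSet {e}).Adj u v := by
        refine ⟨h, ?_⟩
        simp only [SimpleGraph.fromEdgeSet_adj, Set.mem_singleton_iff]
        exact fun hc => hne hc.1
      exact ih hp' he (hadj.symm.reachable.trans hr)

/-- any two paths between the same endpoints traverse the same set of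
bridges. -/
theorem stmt_11 {V : Type*} [Fintype V] (G : SimpleGraph V) (i j : V)
    (W₁ W₂ : G.Walk i j) (h₁ : W₁.IsPath) (h₂ : W₂.IsPath) :
    {e | e ∈ W₁.edges ∧ G.IsBridge e} = {e | e ∈ W₂.edges ∧ G.IsBridge e} := by
  have main : ∀ (Wa Wb : G.Walk i j), Wa.IsPath → ∀ e, e ∈ Wa.edges → G.IsBridge e →
      e ∈ Wb.edges := by
    intro Wa Wb ha e hea hb
    by_contra hnb
    exact bridge_not_reachable_aux G hb Wa ha hea
      ⟨Wb.toDeleteEdges {e} (fun e' he' hee' => hnb (hee' ▸ he'))⟩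
  ext e
  simp only [Set.mem_setOf_eq]
  exact ⟨fun ⟨h1, h2⟩ => ⟨main W₁ W₂ h₁ e h1 h2, h2⟩,
    fun ⟨h1, h2⟩ => ⟨main W₂ W₁ h₂ e h1 h2, h2⟩⟩
end
end
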